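/- arXiv:1501.05196 — 4 statements merged into one kernel-verified Lean document; each statement's English description precedes it below -/
import Mathlib

section
/- The space SV([a,b],L(X,Y)) of functions of bounded semivariation is complete with respect to the norm ‖F‖_SV = ‖F(a)‖_{L(X,Y)} + SV_a^b(F): every sequence (F_n) in SV([a,b],L(X,Y)) that is Cauchy with respect to ‖·‖_SV converges in the norm ‖·‖_SV to some F ∈ SV([a,b],L(X,Y)). -/
open Filter Topology

/-- A division `a = α 0 < α 1 < … < α n = b` of the interval `[a,b]`. -/
def IsDivision (a b : ℝ) (n : ℕ) (α : ℕ → ℝ) : Prop :=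
  α 0 = a ∧ α n = b ∧ ∀ i < n, α i < α (i + 1)

/-- The semivariation `SV_a^b(F)` of `F : [a,b] → L(X,Y)`. -/
noncomputable def semivar {X Y : Type*} [NormedAddCommGroup X] [NormedSpace ℝ X]
    [NormedAddCommGroup Y] [NormedSpace ℝ Y]
    (a b : ℝ) (F : ℝ → X →L[ℝ] Y) : ENNReal :=
  ⨆ (n : ℕ) (α : ℕ → ℝ) (_ : IsDivision a b n α)
    (x : ℕ → X) (_ : ∀ j, ‖x j‖ ≤ 1),
    ENNReal.ofReal ‖∑ j ∈ Finset.range n, (F (α (j + 1)) - F (α j)) (x j)‖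

/-- The (Jordan) variation `var_a^b(G)` of a function with values in a normed space. -/
noncomputable def evar {E : Type*} [NormedAddCommGroup E] (a b : ℝ) (G : ℝ → E) : ENNReal :=
  ⨆ (n : ℕ) (α : ℕ → ℝ) (_ : IsDivision a b n α),
    ENNReal.ofReal (∑ j ∈ Finset.range n, ‖G (α (j + 1)) - G (α j)‖)

section Aux

variable {X Y : Type*} [NormedAddCommGroup X] [NormedSpace ℝ X]
    [NormedAddCommGroup Y] [NormedSpace ℝ Y]

lemma le_semivar (a b : ℝ) (F : ℝ → X →L[ℝ] Y) (n : ℕ) (α : ℕ → ℝ)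
    (hα : IsDivision a b n α) (x : ℕ → X) (hx : ∀ j, ‖x j‖ ≤ 1) :
    ENNReal.ofReal ‖∑ j ∈ Finset.range n, (F (α (j + 1)) - F (α j)) (x j)‖ ≤ semivar a b F :=
  le_iSup_of_le n <| le_iSup_of_le α <| le_iSup_of_le hα <| le_iSup_of_le x <|
    le_iSup_of_le hx le_rfl

lemma semivar_le {a b : ℝ} {F : ℝ → X →L[ℝ] Y} {C : ENNReal}
    (h : ∀ n α, IsDivision a b n α → ∀ x : ℕ → X, (∀ j, ‖x j‖ ≤ 1) →
      ENNReal.ofReal ‖∑ j ∈ Finset.range n, (F (α (j + 1)) - F (α j)) (x j)‖ ≤ C) :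
    semivar a b F ≤ C :=
  iSup_le fun n => iSup_le fun α => iSup_le fun hα => iSup_le fun x => iSup_le fun hx =>
    h n α hα x hx

lemma semivar_add_le (a b : ℝ) (F G : ℝ → X →L[ℝ] Y) :
    semivar a b (fun t => F t + G t) ≤ semivar a b F + semivar a b G := by
  apply semivar_le
  intro n α hα x hx
  have heq : ∑ j ∈ Finset.range n,
      ((fun t => F t + G t) (α (j + 1)) - (fun t => F t + G t) (α j)) (x j)
      = (∑ j ∈ Finset.range n, (F (α (j + 1)) - F (α j)) (x j))
        + ∑ j ∈ Finset.range n, (G (α (j + 1)) - G (α j)) (x j) := by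
    rw [← Finset.sum_add_distrib]
    refine Finset.sum_congr rfl fun j _ => ?_
    simp only [ContinuousLinearMap.sub_apply, ContinuousLinearMap.add_apply]
    abel
  rw [heq]
  calc ENNReal.ofReal ‖(∑ j ∈ Finset.range n, (F (α (j + 1)) - F (α j)) (x j))
        + ∑ j ∈ Finset.range n, (G (α (j + 1)) - G (α j)) (x j)‖
      ≤ ENNReal.ofReal (‖∑ j ∈ Finset.range n, (F (α (j + 1)) - F (α j)) (x j)‖
        + ‖∑ j ∈ Finset.range n, (G (α (j + 1)) - G (α j)) (x j)‖) :=
      ENNReal.ofReal_le_ofReal (norm_add_le _ _)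
    _ ≤ _ := by
      refine (ENNReal.ofReal_add_le).trans ?_
      exact add_le_add (le_semivar a b F n α hα x hx) (le_semivar a b G n α hα x hx)

lemma semivar_neg_le (a b : ℝ) (G : ℝ → X →L[ℝ] Y) :
    semivar a b (fun t => -G t) ≤ semivar a b G := by
  apply semivar_le
  intro n α hα x hx
  have heq : ∑ j ∈ Finset.range n,
      ((fun t => -G t) (α (j + 1)) - (fun t => -G t) (α j)) (x j)
      = -∑ j ∈ Finset.range n, (G (α (j + 1)) - G (α j)) (x j) := by
    rw [← Finset.sum_neg_distrib]
    refine Finset.sum_congr rfl fun j _ => ?_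
    simp only [ContinuousLinearMap.sub_apply, ContinuousLinearMap.neg_apply]
    abel
  rw [heq, norm_neg]
  exact le_semivar a b G n α hα x hx

lemma semivar_sub_le (a b : ℝ) (F G : ℝ → X →L[ℝ] Y) :
    semivar a b (fun t => F t - G t) ≤ semivar a b F + semivar a b G := by
  have h1 : semivar a b (fun t => F t - G t) = semivar a b (fun t => F t + -G t) := by
    simp only [sub_eq_add_neg]
  rw [h1]
  exact (semivar_add_le a b F (fun t => -G t)).trans
    (add_le_add le_rfl (semivar_neg_le a b G))

lemma IsDivision.mono {a b : ℝ} {n : ℕ} {α : ℕ → ℝ} (h : IsDivision a b n α) :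
    ∀ i j, i ≤ j → j ≤ n → α i ≤ α j := by
  intro i j hij hjn
  induction j, hij using Nat.le_induction with
  | base => exact le_rfl
  | succ j hij ih =>
    exact (ih (by omega)).trans (h.2.2 j (by omega)).le

lemma IsDivision.mem_Icc {a b : ℝ} {n : ℕ} {α : ℕ → ℝ} (h : IsDivision a b n α)
    {i : ℕ} (hi : i ≤ n) : α i ∈ Set.Icc a b := by
  constructor
  · rw [← h.1]; exact h.mono 0 i (Nat.zero_le _) hi
  · rw [← h.2.1]; exact h.mono i n hi le_rfl

lemma norm_sub_le_semivar (a b : ℝ) (hab : a < b) (F : ℝ → X →L[ℝ] Y)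
    (hF : semivar a b F ≠ ⊤) {t : ℝ} (ht : t ∈ Set.Icc a b) :
    ‖F t - F a‖ ≤ (semivar a b F).toReal := by
  have key : ∀ x : X, ‖x‖ ≤ 1 → ‖(F t - F a) x‖ ≤ (semivar a b F).toReal := by
    intro x hx
    have main : ENNReal.ofReal ‖(F t - F a) x‖ ≤ semivar a b F := by
      rcases eq_or_lt_of_le ht.1 with hta | hta
      · subst hta
        simp
      rcases eq_or_lt_of_le ht.2 with htb | htb
      · -- t = b : division a < b
        have := le_semivar a b F 1 (fun j => if j = 0 then a else b)
          (by refine ⟨by simp, by simp, fun i hi => ?_⟩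
              have : i = 0 := by omega
              subst this; simpa using hab)
          (fun _ => x) (fun _ => hx)
        rw [htb]
        simpa using this
      · -- a < t < b
        have := le_semivar a b F 2 (fun j => if j = 0 then a else if j = 1 then t else b)
          (by refine ⟨by simp, by simp, fun i hi => ?_⟩
              interval_cases i <;> simp [hta, htb])
          (fun j => if j = 0 then x else 0)
          (by intro j; by_cases hj : j = 0 <;> simp [hj, hx])
        simpa [Finset.sum_range_succ] using this
    have := ENNReal.toReal_mono hF main
    rwa [ENNReal.toReal_ofReal (norm_nonneg _)] at this
  refine ContinuousLinearMap.opNorm_le_bound _ ENNReal.toReal_nonneg fun x => ?_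
  by_cases hx : x = 0
  · simp [hx]
  · have hx' : 0 < ‖x‖ := norm_pos_iff.2 hx
    have h1 := key (‖x‖⁻¹ • x) (by
      rw [norm_smul, norm_inv, norm_norm, inv_mul_cancel₀ hx'.ne'])
    rw [map_smul, norm_smul, norm_inv, norm_norm] at h1
    calc ‖(F t - F a) x‖ = ‖x‖⁻¹ * ‖(F t - F a) x‖ * ‖x‖ := by field_simp
      _ ≤ (semivar a b F).toReal * ‖x‖ := mul_le_mul_of_nonneg_right h1 hx'.le

/-- Lower semicontinuity of the semivariation under pointwise convergence. -/
lemma semivar_le_of_tendsto (a b : ℝ) (G : ℕ → ℝ → X →L[ℝ] Y) (H : ℝ → X →L[ℝ] Y)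
    (hconv : ∀ t ∈ Set.Icc a b, Tendsto (fun m => G m t) atTop (𝓝 (H t)))
    {C : ℝ} (hC : 0 ≤ C) (hbound : ∀ᶠ m in atTop, semivar a b (G m) ≤ ENNReal.ofReal C) :
    semivar a b H ≤ ENNReal.ofReal C := by
  apply semivar_le
  intro n α hα x hx
  rw [ENNReal.ofReal_le_ofReal_iff hC]
  have hterm : ∀ j ∈ Finset.range n,
      Tendsto (fun m => (G m (α (j + 1)) - G m (α j)) (x j)) atTop
        (𝓝 ((H (α (j + 1)) - H (α j)) (x j))) := by
    intro j hj
    have hj' := Finset.mem_range.mp hj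
    have h1 := hconv (α (j + 1)) (hα.mem_Icc (by omega))
    have h2 := hconv (α j) (hα.mem_Icc (by omega))
    have e1 : Tendsto (fun m => G m (α (j + 1)) (x j)) atTop (𝓝 (H (α (j + 1)) (x j))) :=
      ((ContinuousLinearMap.apply ℝ Y (x j)).continuous.tendsto _).comp h1
    have e2 : Tendsto (fun m => G m (α j) (x j)) atTop (𝓝 (H (α j) (x j))) :=
      ((ContinuousLinearMap.apply ℝ Y (x j)).continuous.tendsto _).comp h2
    simpa only [ContinuousLinearMap.sub_apply] using e1.sub e2
  have hsum := (tendsto_finset_sum (Finset.range n) hterm).norm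
  refine le_of_tendsto hsum ?_
  filter_upwards [hbound] with m hm
  have h := (le_semivar a b (G m) n α hα x hx).trans hm
  rwa [ENNReal.ofReal_le_ofReal_iff hC] at h

end Aux

/-- completeness of `SV([a,b],L(X,Y))` with respect to the norm
`‖F‖_SV = ‖F(a)‖ + SV_a^b(F)`: every Cauchy sequence for this norm converges to some
function of bounded semivariation in this norm. -/
theorem semivar_space_complete
    {X Y : Type*} [NormedAddCommGroup X] [NormedSpace ℝ X] [CompleteSpace X]
    [NormedAddCommGroup Y] [NormedSpace ℝ Y] [CompleteSpace Y]
    (a b : ℝ) (hab : a < b) (Fseq : ℕ → ℝ → X →L[ℝ] Y)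
    (hbdd : ∀ n, semivar a b (Fseq n) < ⊤)
    (hcauchy : ∀ ε : ℝ, 0 < ε → ∃ N : ℕ, ∀ m ≥ N, ∀ n ≥ N,
      ‖Fseq m a - Fseq n a‖ +
        (semivar a b (fun t => Fseq m t - Fseq n t)).toReal < ε) :
    ∃ F : ℝ → X →L[ℝ] Y, semivar a b F < ⊤ ∧
      Tendsto (fun n => ‖Fseq n a - F a‖ +
        (semivar a b (fun t => Fseq n t - F t)).toReal) atTop (𝓝 0) := by
  classical
  have ha : a ∈ Set.Icc a b := ⟨le_rfl, hab.le⟩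
  have hfin : ∀ m n, semivar a b (fun t => Fseq m t - Fseq n t) ≠ ⊤ := fun m n =>
    ((semivar_sub_le a b _ _).trans_lt (ENNReal.add_lt_top.2 ⟨hbdd m, hbdd n⟩)).ne
  -- pointwise estimate
  have hpt : ∀ t ∈ Set.Icc a b, ∀ m n, ‖Fseq m t - Fseq n t‖ ≤
      ‖Fseq m a - Fseq n a‖ + (semivar a b (fun t => Fseq m t - Fseq n t)).toReal := by
    intro t ht m n
    have h1 := norm_sub_le_semivar a b hab (fun t => Fseq m t - Fseq n t) (hfin m n) ht
    have h2 : ‖Fseq m t - Fseq n t‖ ≤ ‖Fseq m a - Fseq n a‖ +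
        ‖(Fseq m t - Fseq n t) - (Fseq m a - Fseq n a)‖ :=
      norm_le_norm_add_norm_sub' _ _
    exact h2.trans (by linarith)
  -- pointwise Cauchy
  have hcs : ∀ t ∈ Set.Icc a b, CauchySeq (fun n => Fseq n t) := by
    intro t ht
    rw [Metric.cauchySeq_iff]
    intro ε hε
    obtain ⟨N, hN⟩ := hcauchy ε hε
    refine ⟨N, fun m hm n hn => ?_⟩
    rw [dist_eq_norm]
    exact lt_of_le_of_lt (hpt t ht m n) (hN m hm n hn)
  set F : ℝ → X →L[ℝ] Y := fun t => limUnder atTop (fun n => Fseq n t) with hFdef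
  have hFlim : ∀ t ∈ Set.Icc a b, Tendsto (fun n => Fseq n t) atTop (𝓝 (F t)) :=
    fun t ht => (hcs t ht).tendsto_limUnder
  -- semivariation estimate for differences with the limit
  have hdiff : ∀ (n N : ℕ) (ε : ℝ), 0 < ε →
      (∀ m ≥ N, (semivar a b (fun t => Fseq n t - Fseq m t)).toReal ≤ ε) →
      semivar a b (fun t => Fseq n t - F t) ≤ ENNReal.ofReal ε := by
    intro n N ε hε hm
    refine semivar_le_of_tendsto a b (fun m => fun t => Fseq n t - Fseq m t)
      (fun t => Fseq n t - F t) ?_ hε.le ?_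
    · intro t ht
      exact (tendsto_const_nhds (α := ℕ)).sub (hFlim t ht)
    · filter_upwards [eventually_ge_atTop N] with m hmN
      rw [ENNReal.le_ofReal_iff_toReal_le (hfin n m) hε.le]
      exact hm m hmN
  -- boundedness of semivar F
  have hFfin : semivar a b F < ⊤ := by
    obtain ⟨N, hN⟩ := hcauchy 1 one_pos
    have h1 : semivar a b (fun t => Fseq N t - F t) ≤ ENNReal.ofReal 1 := by
      refine hdiff N N 1 one_pos fun m hm => ?_
      have := hN N le_rfl m hm
      have h0 : (0:ℝ) ≤ ‖Fseq N a - Fseq m a‖ := norm_nonneg _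
      linarith
    have h2 : semivar a b F = semivar a b (fun t => -(Fseq N t - F t) + Fseq N t) := by
      congr 1
      funext t
      abel
    rw [h2]
    refine lt_of_le_of_lt (semivar_add_le a b _ _) ?_
    refine ENNReal.add_lt_top.2 ⟨?_, hbdd N⟩
    exact lt_of_le_of_lt (semivar_neg_le a b _) (h1.trans_lt ENNReal.ofReal_lt_top)
  refine ⟨F, hFfin, ?_⟩
  rw [Metric.tendsto_atTop]
  intro ε hε
  obtain ⟨N, hN⟩ := hcauchy (ε / 3) (by linarith)
  refine ⟨N, fun n hn => ?_⟩
  have hnorm : ‖Fseq n a - F a‖ ≤ ε / 3 := by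
    have hT : Tendsto (fun m => ‖Fseq n a - Fseq m a‖) atTop (𝓝 ‖Fseq n a - F a‖) :=
      ((tendsto_const_nhds (α := ℕ)).sub (hFlim a ha)).norm
    refine le_of_tendsto hT ?_
    filter_upwards [eventually_ge_atTop N] with m hm
    have := hN n hn m hm
    have h0 : (0:ℝ) ≤ (semivar a b (fun t => Fseq n t - Fseq m t)).toReal :=
      ENNReal.toReal_nonneg
    linarith
  have hsv : (semivar a b (fun t => Fseq n t - F t)).toReal ≤ ε / 3 := by
    refine ENNReal.toReal_le_of_le_ofReal (by linarith) ?_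
    refine hdiff n N (ε / 3) (by linarith) fun m hm => ?_
    have := hN n hn m hm
    have h0 : (0:ℝ) ≤ ‖Fseq n a - Fseq m a‖ := norm_nonneg _
    linarith
  have hval : ‖Fseq n a - F a‖ + (semivar a b (fun t => Fseq n t - F t)).toReal ≤ 2 * ε / 3 := by
    linarith
  rw [Real.dist_eq, sub_zero, abs_of_nonneg (by positivity)]
  linarith
end

section
/- Let F : [a,b] → L(X,Y) be of bounded semivariation on [a,b]. Then F is of bounded variation on [a,b] if and only if M := sup{ ∑_{j=1}^{ν} SV_{α_{j−1}}^{α_j}(F) : D = {a = α₀ < … < α_ν = b} a division of [a,b] } < ∞; moreover, in this case var_a^b(F) = M. -/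
open Filter Topology

/- ### Auxiliary lemmas -/

lemma isDivision_trivial {a b : ℝ} (hab : a < b) :
    IsDivision a b 1 (fun i => if i = 0 then a else b) := by
  refine ⟨rfl, rfl, ?_⟩
  intro i hi
  interval_cases i
  simpa using hab

lemma div_strict {n : ℕ} {α : ℕ → ℝ} (h : ∀ i < n, α i < α (i + 1))
    {i j : ℕ} (hij : i < j) (hj : j ≤ n) : α i < α j := by
  induction j with
  | zero => omega
  | succ j ih =>
    rcases Nat.lt_succ_iff_lt_or_eq.mp hij with h' | h'
    · exact (ih h' (by omega)).trans (h j (by omega))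
    · subst h'; exact h i (by omega)

lemma semivar_le_evar {X Y : Type*} [NormedAddCommGroup X] [NormedSpace ℝ X]
    [NormedAddCommGroup Y] [NormedSpace ℝ Y] (c d : ℝ) (F : ℝ → X →L[ℝ] Y) :
    semivar c d F ≤ evar c d F := by
  refine iSup_le fun n => iSup_le fun α => iSup_le fun hα => iSup_le fun x => iSup_le fun hx => ?_
  have hb : ‖∑ j ∈ Finset.range n, (F (α (j + 1)) - F (α j)) (x j)‖ ≤
      ∑ j ∈ Finset.range n, ‖F (α (j + 1)) - F (α j)‖ := by
    refine (norm_sum_le _ _).trans (Finset.sum_le_sum fun j _ => ?_)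
    calc ‖(F (α (j + 1)) - F (α j)) (x j)‖ ≤ ‖F (α (j + 1)) - F (α j)‖ * ‖x j‖ :=
          (F (α (j + 1)) - F (α j)).le_opNorm _
      _ ≤ ‖F (α (j + 1)) - F (α j)‖ * 1 := by
          exact mul_le_mul_of_nonneg_left (hx j) (norm_nonneg _)
      _ = _ := mul_one _
  calc ENNReal.ofReal ‖∑ j ∈ Finset.range n, (F (α (j + 1)) - F (α j)) (x j)‖
      ≤ ENNReal.ofReal (∑ j ∈ Finset.range n, ‖F (α (j + 1)) - F (α j)‖) :=
        ENNReal.ofReal_le_ofReal hb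
    _ ≤ evar c d F := le_iSup_of_le n <| le_iSup_of_le α <| le_iSup_of_le hα le_rfl

lemma ofReal_opNorm_le_semivar {X Y : Type*} [NormedAddCommGroup X] [NormedSpace ℝ X]
    [NormedAddCommGroup Y] [NormedSpace ℝ Y] {c d : ℝ} (hcd : c < d) (F : ℝ → X →L[ℝ] Y) :
    ENNReal.ofReal ‖F d - F c‖ ≤ semivar c d F := by
  have key : ∀ x : X, ‖x‖ ≤ 1 →
      ENNReal.ofReal ‖(F d - F c) x‖ ≤ semivar c d F := by
    intro x hx
    have h1 : ENNReal.ofReal ‖∑ j ∈ Finset.range 1,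
        (F ((fun i => if i = 0 then c else d) (j + 1)) -
          F ((fun i => if i = 0 then c else d) j)) ((fun _ => x) j)‖ ≤ semivar c d F :=
      le_iSup_of_le 1 <| le_iSup_of_le (fun i => if i = 0 then c else d) <|
        le_iSup_of_le (isDivision_trivial hcd) <| le_iSup_of_le (fun _ => x) <|
          le_iSup_of_le (fun _ => hx) le_rfl
    simpa using h1
  by_cases hS : semivar c d F = ⊤
  · simp [hS]
  rw [ENNReal.ofReal_le_iff_le_toReal hS]
  refine ContinuousLinearMap.opNorm_le_of_unit_norm ENNReal.toReal_nonneg fun x hx => ?_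
  exact (ENNReal.ofReal_le_iff_le_toReal hS).mp (key x hx.le)

section Evar

variable {E : Type*} [NormedAddCommGroup E]

/-- The index type of divisions of `[a,b]`. -/
def DivIdx (a b : ℝ) : Type := Σ n : ℕ, {α : ℕ → ℝ // IsDivision a b n α}

lemma divIdx_nonempty {a b : ℝ} (hab : a < b) : Nonempty (DivIdx a b) :=
  ⟨⟨1, ⟨fun i => if i = 0 then a else b, isDivision_trivial hab⟩⟩⟩

lemma evar_eq_sigma (a b : ℝ) (G : ℝ → E) :
    evar a b G = ⨆ d : DivIdx a b,
      ENNReal.ofReal (∑ j ∈ Finset.range d.1, ‖G (d.2.1 (j + 1)) - G (d.2.1 j)‖) := by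
  rw [evar]
  unfold DivIdx
  rw [iSup_sigma]
  exact iSup_congr fun n => iSup_subtype'


lemma evar_superadd {a c b : ℝ} (hac : a < c) (hcb : c < b) (G : ℝ → E) :
    evar a c G + evar c b G ≤ evar a b G := by
  haveI := divIdx_nonempty hac
  haveI := divIdx_nonempty hcb
  rw [evar_eq_sigma a c, evar_eq_sigma c b]
  refine ENNReal.iSup_add_iSup_le fun d1 d2 => ?_
  obtain ⟨m, β, hβ⟩ := d1
  obtain ⟨k, γ, hγ⟩ := d2
  have hm : 1 ≤ m := by
    rcases Nat.eq_zero_or_pos m with h | h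
    · exact absurd (by rw [← hβ.1, ← hβ.2.1, h] : a = c) hac.ne
    · exact h
  have hk : 1 ≤ k := by
    rcases Nat.eq_zero_or_pos k with h | h
    · exact absurd (by rw [← hγ.1, ← hγ.2.1, h] : c = b) hcb.ne
    · exact h
  set δ : ℕ → ℝ := fun i => if i < m then β i else γ (i - m) with hδ
  have hδβ : ∀ j ≤ m, δ j = β j := by
    intro j hj
    rcases lt_or_eq_of_le hj with h | h
    · simp [hδ, h]
    · rw [h]
      have h1 : δ m = γ 0 := by
        simp only [hδ]
        rw [if_neg (lt_irrefl m), Nat.sub_self]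
      rw [h1, hγ.1, hβ.2.1]
  have hδγ : ∀ j, δ (m + j) = γ j := by
    intro j
    simp only [hδ, if_neg (by omega : ¬ m + j < m), Nat.add_sub_cancel_left]
  have hdiv : IsDivision a b (m + k) δ := by
    refine ⟨?_, ?_, ?_⟩
    · rw [hδβ 0 (by omega), hβ.1]
    · rw [hδγ k, hγ.2.1]
    · intro i hi
      by_cases h1 : i < m
      · rw [hδβ i h1.le, hδβ (i + 1) (by omega)]
        exact hβ.2.2 i h1
      · have e1 : δ i = γ (i - m) := by
          simp only [hδ]
          rw [if_neg h1]
        have e2 : δ (i + 1) = γ (i - m + 1) := by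
          simp only [hδ]
          rw [if_neg (by omega : ¬ i + 1 < m), show i + 1 - m = i - m + 1 by omega]
        rw [e1, e2]
        exact hγ.2.2 (i - m) (by omega)
  have hsum : ∑ j ∈ Finset.range (m + k), ‖G (δ (j + 1)) - G (δ j)‖ =
      (∑ j ∈ Finset.range m, ‖G (β (j + 1)) - G (β j)‖) +
      ∑ j ∈ Finset.range k, ‖G (γ (j + 1)) - G (γ j)‖ := by
    rw [Finset.sum_range_add]
    congr 1
    · refine Finset.sum_congr rfl fun j hj => ?_
      have hj' := Finset.mem_range.mp hj
      rw [hδβ j hj'.le, hδβ (j + 1) (by omega)]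
    · refine Finset.sum_congr rfl fun j hj => ?_
      have : m + j + 1 = m + (j + 1) := by omega
      rw [this, hδγ (j + 1), hδγ j]
  calc ENNReal.ofReal (∑ j ∈ Finset.range m, ‖G (β (j + 1)) - G (β j)‖) +
        ENNReal.ofReal (∑ j ∈ Finset.range k, ‖G (γ (j + 1)) - G (γ j)‖)
      = ENNReal.ofReal (∑ j ∈ Finset.range (m + k), ‖G (δ (j + 1)) - G (δ j)‖) := by
        rw [hsum, ENNReal.ofReal_add (Finset.sum_nonneg fun _ _ => norm_nonneg _)
          (Finset.sum_nonneg fun _ _ => norm_nonneg _)]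
    _ ≤ evar a b G := le_iSup_of_le (m + k) <| le_iSup_of_le δ <| le_iSup_of_le hdiv le_rfl

lemma sum_evar_le {a : ℝ} (G : ℝ → E) :
    ∀ (n : ℕ) (b : ℝ) (α : ℕ → ℝ), IsDivision a b n α →
      ∑ j ∈ Finset.range n, evar (α j) (α (j + 1)) G ≤ evar a b G := by
  intro n
  induction n with
  | zero => intro b α hα; rw [Finset.sum_range_zero]; exact zero_le
  | succ n ih =>
    intro b α hα
    rcases Nat.eq_zero_or_pos n with hn | hn
    · subst hn
      rw [Finset.sum_range_succ, Finset.sum_range_zero, zero_add, hα.1, hα.2.1]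
    · have hdiv' : IsDivision a (α n) n α :=
        ⟨hα.1, rfl, fun i hi => hα.2.2 i (by omega)⟩
      have h1 : ∑ j ∈ Finset.range n, evar (α j) (α (j + 1)) G ≤ evar a (α n) G :=
        ih (α n) α hdiv'
      have han : a < α n := by
        rw [← hα.1]; exact div_strict hα.2.2 hn (by omega)
      have hnb : α n < b := by
        rw [← hα.2.1]; exact hα.2.2 n (by omega)
      rw [Finset.sum_range_succ]
      calc (∑ j ∈ Finset.range n, evar (α j) (α (j + 1)) G) + evar (α n) (α (n + 1)) G
          ≤ evar a (α n) G + evar (α n) b G := by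
            rw [hα.2.1]; exact add_le_add h1 le_rfl
        _ ≤ evar a b G := evar_superadd han hnb G

end Evar

/-- for `F` of bounded semivariation, `F` is of bounded variation iff
`M := sup_D ∑_j SV_{α_{j−1}}^{α_j}(F) < ∞`, and in this case `var_a^b(F) = M`. -/
theorem bv_iff_sup_sum_semivar
    {X Y : Type*} [NormedAddCommGroup X] [NormedSpace ℝ X] [CompleteSpace X]
    [NormedAddCommGroup Y] [NormedSpace ℝ Y] [CompleteSpace Y]
    (a b : ℝ) (hab : a < b) (F : ℝ → X →L[ℝ] Y) (hF : semivar a b F < ⊤) :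
    (evar a b F < ⊤ ↔
      (⨆ (n : ℕ) (α : ℕ → ℝ) (_ : IsDivision a b n α),
        ∑ j ∈ Finset.range n, semivar (α j) (α (j + 1)) F) < ⊤) ∧
    ((⨆ (n : ℕ) (α : ℕ → ℝ) (_ : IsDivision a b n α),
        ∑ j ∈ Finset.range n, semivar (α j) (α (j + 1)) F) < ⊤ →
      evar a b F =
        ⨆ (n : ℕ) (α : ℕ → ℝ) (_ : IsDivision a b n α),
          ∑ j ∈ Finset.range n, semivar (α j) (α (j + 1)) F) := by
  have key : evar a b F =
      ⨆ (n : ℕ) (α : ℕ → ℝ) (_ : IsDivision a b n α),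
        ∑ j ∈ Finset.range n, semivar (α j) (α (j + 1)) F := by
    apply le_antisymm
    · refine iSup_le fun n => iSup_le fun α => iSup_le fun hα => ?_
      calc ENNReal.ofReal (∑ j ∈ Finset.range n, ‖F (α (j + 1)) - F (α j)‖)
          = ∑ j ∈ Finset.range n, ENNReal.ofReal ‖F (α (j + 1)) - F (α j)‖ :=
            ENNReal.ofReal_sum_of_nonneg fun _ _ => norm_nonneg _
        _ ≤ ∑ j ∈ Finset.range n, semivar (α j) (α (j + 1)) F :=
            Finset.sum_le_sum fun j hj =>
              ofReal_opNorm_le_semivar (hα.2.2 j (Finset.mem_range.mp hj)) F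
        _ ≤ ⨆ (n : ℕ) (α : ℕ → ℝ) (_ : IsDivision a b n α),
              ∑ j ∈ Finset.range n, semivar (α j) (α (j + 1)) F :=
            le_iSup_of_le n <| le_iSup_of_le α <| le_iSup_of_le hα le_rfl
    · refine iSup_le fun n => iSup_le fun α => iSup_le fun hα => ?_
      calc ∑ j ∈ Finset.range n, semivar (α j) (α (j + 1)) F
          ≤ ∑ j ∈ Finset.range n, evar (α j) (α (j + 1)) F :=
            Finset.sum_le_sum fun j _ => semivar_le_evar _ _ F
        _ ≤ evar a b F := sum_evar_le F n b α hα
  exact ⟨by rw [key], fun _ => key⟩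
end

section
/- Let Y be a weakly sequentially complete real Banach space. Then every function F : [a,b] → L(X,Y) of bounded semivariation on [a,b] satisfies lim_{δ→0+} SV_{[t−δ,t)}(F) = 0 for every t ∈ (a,b] and lim_{δ→0+} SV_{(t,t+δ]}(F) = 0 for every t ∈ [a,b). -/
open Filter Topology

/-- The semivariation on the half-closed interval `[c,d)`: `sup_{t ∈ [c,d)} SV_c^t(F)`. -/
noncomputable def semivarIco {X Y : Type*} [NormedAddCommGroup X] [NormedSpace ℝ X]
    [NormedAddCommGroup Y] [NormedSpace ℝ Y] (c d : ℝ) (F : ℝ → X →L[ℝ] Y) : ENNReal :=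
  ⨆ t ∈ Set.Ico c d, semivar c t F

/-- The semivariation on the half-closed interval `(c,d]`: `sup_{t ∈ (c,d]} SV_t^d(F)`. -/
noncomputable def semivarIoc {X Y : Type*} [NormedAddCommGroup X] [NormedSpace ℝ X]
    [NormedAddCommGroup Y] [NormedSpace ℝ Y] (c d : ℝ) (F : ℝ → X →L[ℝ] Y) : ENNReal :=
  ⨆ t ∈ Set.Ioc c d, semivar t d F

/-- `Y` is weakly sequentially complete: every sequence `(y n)` such that `(f (y n))` converges
in `ℝ` for every `f ∈ Y*` converges weakly in `Y`. -/
def WeaklySeqComplete (Y : Type*) [NormedAddCommGroup Y] [NormedSpace ℝ Y] : Prop :=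
  ∀ y : ℕ → Y,
    (∀ f : Y →L[ℝ] ℝ, ∃ l : ℝ, Filter.Tendsto (fun n => f (y n)) Filter.atTop (𝓝 l)) →
    ∃ z : Y, ∀ f : Y →L[ℝ] ℝ, Filter.Tendsto (fun n => f (y n)) Filter.atTop (𝓝 (f z))

namespace SV15


variable {X Y : Type*} [NormedAddCommGroup X] [NormedSpace ℝ X]
  [NormedAddCommGroup Y] [NormedSpace ℝ Y]

/-- The set of "Riemann–Stieltjes style sums" over divisions of `[c,d]` with unit vectors. -/
def Sums (F : ℝ → X →L[ℝ] Y) (c d : ℝ) : Set Y :=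
  {y | ∃ (n : ℕ) (α : ℕ → ℝ) (x : ℕ → X), IsDivision c d n α ∧ (∀ j, ‖x j‖ ≤ 1) ∧
      y = ∑ j ∈ Finset.range n, (F (α (j + 1)) - F (α j)) (x j)}

lemma sums_zero (F : ℝ → X →L[ℝ] Y) {c d : ℝ} (h : c ≤ d) : (0 : Y) ∈ Sums F c d := by
  rcases eq_or_lt_of_le h with he | hlt
  · exact ⟨0, fun _ => c, 0, ⟨rfl, he, fun i hi => absurd hi (Nat.not_lt_zero i)⟩,
      fun j => by simp, by simp⟩
  · refine ⟨1, fun j => if j = 0 then c else d, 0, ⟨by simp, by simp, ?_⟩, fun j => by simp, by simp⟩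
    intro i hi
    interval_cases i
    simpa using hlt

lemma sums_smul (F : ℝ → X →L[ℝ] Y) {c d r : ℝ} {y : Y} (hr : |r| ≤ 1)
    (hy : y ∈ Sums F c d) : r • y ∈ Sums F c d := by
  obtain ⟨n, α, x, hdiv, hx, rfl⟩ := hy
  refine ⟨n, α, fun j => r • x j, hdiv, fun j => ?_, ?_⟩
  · rw [norm_smul]
    calc ‖r‖ * ‖x j‖ ≤ 1 * 1 := by
          apply mul_le_mul (by simpa [Real.norm_eq_abs] using hr) (hx j) (norm_nonneg _) zero_le_one
    _ = 1 := one_mul 1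
  · rw [Finset.smul_sum]
    exact Finset.sum_congr rfl fun j _ => (ContinuousLinearMap.map_smul _ _ _).symm

lemma sums_append (F : ℝ → X →L[ℝ] Y) {c m d : ℝ} {y₁ y₂ : Y}
    (h₁ : y₁ ∈ Sums F c m) (h₂ : y₂ ∈ Sums F m d) : y₁ + y₂ ∈ Sums F c d := by
  obtain ⟨n, α, x, hα, hx, rfl⟩ := h₁
  obtain ⟨p, β, x', hβ, hx', rfl⟩ := h₂
  set γ : ℕ → ℝ := fun j => if j < n then α j else β (j - n) with hγdef
  set ξ : ℕ → X := fun j => if j < n then x j else x' (j - n) with hξdef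
  have hγα : ∀ j ≤ n, γ j = α j := by
    intro j hj
    rcases lt_or_eq_of_le hj with hj | rfl
    · simp [hγdef, hj]
    · simp only [hγdef, lt_irrefl, if_false, Nat.sub_self]
      rw [hβ.1, hα.2.1]
  have hγβ : ∀ j, γ (n + j) = β j := by
    intro j
    simp only [hγdef, Nat.add_sub_cancel_left, if_neg (by omega : ¬ n + j < n)]
  refine ⟨n + p, γ, ξ, ⟨?_, ?_, ?_⟩, ?_, ?_⟩
  · rw [hγα 0 (Nat.zero_le n), hα.1]
  · have := hγβ p; rw [this, hβ.2.1]
  · intro i hi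
    by_cases h1 : i + 1 ≤ n
    · rw [hγα i (by omega), hγα (i + 1) h1]
      exact hα.2.2 i (by omega)
    · have hin : n ≤ i := by omega
      obtain ⟨j, rfl⟩ := Nat.exists_eq_add_of_le hin
      rw [hγβ j, show n + j + 1 = n + (j + 1) from rfl, hγβ (j + 1)]
      exact hβ.2.2 j (by omega)
  · intro j
    by_cases hj : j < n
    · simpa [hξdef, hj] using hx j
    · simpa [hξdef, hj] using hx' (j - n)
  · rw [Finset.sum_range_add]
    congr 1
    · refine Finset.sum_congr rfl fun j hj => ?_
      rw [Finset.mem_range] at hj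
      rw [hγα j (le_of_lt hj), hγα (j + 1) (by omega)]
      simp [hξdef, hj]
    · refine Finset.sum_congr rfl fun j hj => ?_
      rw [Finset.mem_range] at hj
      rw [show n + j + 1 = n + (j + 1) from rfl, hγβ (j + 1), hγβ j]
      simp [hξdef, Nat.add_sub_cancel_left]

lemma semivar_eq_biSup (F : ℝ → X →L[ℝ] Y) (c d : ℝ) :
    semivar c d F = ⨆ y ∈ Sums F c d, ENNReal.ofReal ‖y‖ := by
  apply le_antisymm
  · refine iSup_le fun n => iSup_le fun α => iSup_le fun hdiv => iSup_le fun x => iSup_le fun hx => ?_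
    exact le_iSup₂_of_le _ ⟨n, α, x, hdiv, hx, rfl⟩ le_rfl
  · refine iSup_le fun y => iSup_le fun hy => ?_
    obtain ⟨n, α, x, hdiv, hx, rfl⟩ := hy
    exact le_iSup_of_le n (le_iSup_of_le α (le_iSup_of_le hdiv (le_iSup_of_le x
      (le_iSup_of_le hx le_rfl))))

lemma sums_norm_le (F : ℝ → X →L[ℝ] Y) {c d : ℝ} {y : Y} (hy : y ∈ Sums F c d) :
    ENNReal.ofReal ‖y‖ ≤ semivar c d F := by
  rw [semivar_eq_biSup]
  exact le_iSup₂_of_le y hy le_rfl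

lemma sums_mono_left (F : ℝ → X →L[ℝ] Y) {c' c d : ℝ} (h : c' ≤ c) :
    Sums F c d ⊆ Sums F c' d := fun y hy => by
  simpa using sums_append F (sums_zero F h) hy

lemma sums_mono_right (F : ℝ → X →L[ℝ] Y) {c d d' : ℝ} (h : d ≤ d') :
    Sums F c d ⊆ Sums F c d' := fun y hy => by
  simpa using sums_append F hy (sums_zero F h)

lemma semivar_mono_left (F : ℝ → X →L[ℝ] Y) {c' c d : ℝ} (h : c' ≤ c) :
    semivar c d F ≤ semivar c' d F := by
  rw [semivar_eq_biSup, semivar_eq_biSup]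
  exact biSup_mono (sums_mono_left F h)

lemma semivar_mono_right (F : ℝ → X →L[ℝ] Y) {c d d' : ℝ} (h : d ≤ d') :
    semivar c d F ≤ semivar c d' F := by
  rw [semivar_eq_biSup, semivar_eq_biSup]
  exact biSup_mono (sums_mono_right F h)

lemma sums_chain (F : ℝ → X →L[ℝ] Y) (s : ℕ → ℝ) (y : ℕ → Y) :
    ∀ K : ℕ, (∀ k < K, y k ∈ Sums F (s k) (s (k + 1))) →
      (∑ k ∈ Finset.range K, y k) ∈ Sums F (s 0) (s K)
  | 0, _ => by
      simpa using sums_zero F (le_refl (s 0))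
  | (K + 1), h => by
      rw [Finset.sum_range_succ]
      exact sums_append F (sums_chain F s y K fun k hk => h k (by omega)) (h K (by omega))

lemma sums_chain' (F : ℝ → X →L[ℝ] Y) (s : ℕ → ℝ) (y : ℕ → Y) :
    ∀ K : ℕ, (∀ k < K, y k ∈ Sums F (s (k + 1)) (s k)) →
      (∑ k ∈ Finset.range K, y k) ∈ Sums F (s K) (s 0)
  | 0, _ => by
      simpa using sums_zero F (le_refl (s 0))
  | (K + 1), h => by
      rw [Finset.sum_range_succ,
        add_comm (∑ k ∈ Finset.range K, y k) (y K)]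
      exact sums_append F (h K (by omega)) (sums_chain' F s y K fun k hk => h k (by omega))



/-- Sum of the nonnegative row `m` over the index set `T`. -/
noncomputable def rsum (m : ℕ → ENNReal) (T : Set ℕ) : ENNReal := ∑' j, T.indicator m j

lemma rsum_mono {m : ℕ → ENNReal} {T T' : Set ℕ} (h : T ⊆ T') : rsum m T ≤ rsum m T' :=
  Summable.tsum_le_tsum (fun j => Set.indicator_le_indicator_of_subset h (fun _ => zero_le) j)
    ENNReal.summable ENNReal.summable

lemma rsum_union {m : ℕ → ENNReal} {T T' : Set ℕ} (h : Disjoint T T') :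
    rsum m (T ∪ T') = rsum m T + rsum m T' := by
  unfold rsum
  rw [← ENNReal.tsum_add]
  exact tsum_congr fun j => by rw [Set.indicator_union_of_disjoint h]

lemma rsum_le_tsum (m : ℕ → ENNReal) (T : Set ℕ) : rsum m T ≤ ∑' j, m j :=
  Summable.tsum_le_tsum (fun j => Set.indicator_le_self _ _ j) ENNReal.summable ENNReal.summable

/-- Any infinite set of naturals can be split into countably many pairwise
disjoint infinite subsets. -/
lemma exists_partition {B : Set ℕ} (hB : B.Infinite) :
    ∃ C : ℕ → Set ℕ, (∀ i, C i ⊆ B) ∧ (∀ i, (C i).Infinite) ∧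
      (∀ i i', i ≠ i' → Disjoint (C i) (C i')) := by
  haveI : Infinite B := hB.to_subtype
  haveI : Countable B := Subtype.countable
  obtain ⟨d⟩ := (nonempty_denumerable_iff (α := ↥B)).2 ⟨inferInstance, inferInstance⟩
  let e : ℕ → B := (Denumerable.eqv B).symm
  have he : Function.Injective e := (Denumerable.eqv B).symm.injective
  refine ⟨fun i => Set.range fun j => (e (Nat.pair i j) : ℕ), fun i => ?_, fun i => ?_, ?_⟩
  · rintro x ⟨j, rfl⟩
    exact (e (Nat.pair i j)).2
  · apply Set.infinite_range_of_injective
    intro j j' hjj'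
    have := he (Subtype.val_injective hjj')
    exact (Nat.pair_eq_pair.1 this).2
  · intro i i' hii'
    rw [Set.disjoint_left]
    rintro x ⟨j, rfl⟩ ⟨j', hj'⟩
    have := he (Subtype.val_injective hj')
    exact hii' ((Nat.pair_eq_pair.1 this).1).symm

lemma rosenthal_aux (m : ℕ → ℕ → ENNReal) (δ : ENNReal) (hδt : δ ≠ ⊤) :
    ∀ (n : ℕ) (B : Set ℕ), B.Infinite →
      (∀ k ∈ B, rsum (m k) (B \ {k}) ≤ (n + 1 : ℕ) * δ) →
      ∃ M, M ⊆ B ∧ M.Infinite ∧ ∀ k ∈ M, rsum (m k) (M \ {k}) ≤ δ := by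
  intro n
  induction n with
  | zero =>
    intro B hB h
    exact ⟨B, le_refl _, hB, fun k hk => by simpa using h k hk⟩
  | succ n ih =>
    intro B hB h
    obtain ⟨C, hCB, hCinf, hCdisj⟩ := exists_partition hB
    by_cases hcase : ∃ i, ∀ k ∈ C i, rsum (m k) (C i \ {k}) ≤ δ
    · obtain ⟨i, hi⟩ := hcase
      exact ⟨C i, hCB i, hCinf i, hi⟩
    · push_neg at hcase
      choose kk hk1 hk2 using hcase
      have hkinj : Function.Injective kk := by
        intro i i' hii'
        by_contra hne
        exact Set.disjoint_left.1 (hCdisj i i' hne) (hk1 i) (hii' ▸ hk1 i')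
      have hkB : ∀ i, kk i ∈ B := fun i => hCB i (hk1 i)
      have key : ∀ i, rsum (m (kk i)) (B \ C i) ≤ (n + 1 : ℕ) * δ := by
        intro i
        have hdisj : Disjoint (B \ C i) (C i \ {kk i}) :=
          Set.disjoint_of_subset_right Set.diff_subset
            (Set.disjoint_sdiff_left)
        have hsub : (B \ C i) ∪ (C i \ {kk i}) ⊆ B \ {kk i} := by
          rintro x (⟨hxB, hxC⟩ | ⟨hxC, hxk⟩)
          · exact ⟨hxB, fun hx => hxC (by rw [Set.mem_singleton_iff] at hx; exact hx ▸ hk1 i)⟩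
          · exact ⟨hCB i hxC, hxk⟩
        have h1 : rsum (m (kk i)) (B \ C i) + rsum (m (kk i)) (C i \ {kk i})
            ≤ (n + 1 + 1 : ℕ) * δ := by
          rw [← rsum_union hdisj]
          exact le_trans (rsum_mono hsub) (h (kk i) (hkB i))
        have h2 : rsum (m (kk i)) (B \ C i) + δ ≤ (n + 1 : ℕ) * δ + δ := by
          calc rsum (m (kk i)) (B \ C i) + δ
              ≤ rsum (m (kk i)) (B \ C i) + rsum (m (kk i)) (C i \ {kk i}) :=
                add_le_add_right (le_of_lt (hk2 i)) _
            _ ≤ (n + 1 + 1 : ℕ) * δ := h1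
            _ = (n + 1 : ℕ) * δ + δ := by push_cast; ring
        exact (ENNReal.add_le_add_iff_right hδt).1 h2
      have hB' : (Set.range kk).Infinite := Set.infinite_range_of_injective hkinj
      have hbound : ∀ k ∈ Set.range kk, rsum (m k) (Set.range kk \ {k}) ≤ (n + 1 : ℕ) * δ := by
        rintro _ ⟨i, rfl⟩
        refine le_trans (rsum_mono ?_) (key i)
        rintro x ⟨⟨i', rfl⟩, hx⟩
        have hii' : i' ≠ i := fun hh => hx (by rw [hh]; exact rfl)
        exact ⟨hkB i', Set.disjoint_left.1 (hCdisj i' i hii') (hk1 i')⟩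
      obtain ⟨M, hM1, hM2, hM3⟩ := ih (Set.range kk) hB' hbound
      exact ⟨M, le_trans hM1 (by rintro x ⟨i, rfl⟩; exact hkB i), hM2, hM3⟩

/-- Rosenthal's lemma for nonnegative infinite matrices with uniformly bounded rows. -/
lemma rosenthal (m : ℕ → ℕ → ENNReal) (C : ENNReal) (hC : C ≠ ⊤)
    (hrow : ∀ k, ∑' j, m k j ≤ C) (δ : ENNReal) (hδ0 : 0 < δ) (hδt : δ ≠ ⊤) :
    ∃ M : Set ℕ, M.Infinite ∧ ∀ k ∈ M, rsum (m k) (M \ {k}) ≤ δ := by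
  obtain ⟨n, hn⟩ := ENNReal.exists_nat_gt (ENNReal.div_lt_top hC hδ0.ne').ne
  have hCn : C ≤ (n + 1 : ℕ) * δ := by
    have h1 : C / δ * δ ≤ (n : ENNReal) * δ := mul_le_mul_left (le_of_lt hn) δ
    rw [ENNReal.div_mul_cancel hδ0.ne' hδt] at h1
    refine le_trans h1 (mul_le_mul_left ?_ δ)
    exact_mod_cast Nat.cast_le.2 (Nat.le_succ n)
  obtain ⟨M, _, hM2, hM3⟩ := rosenthal_aux m δ hδt n Set.univ Set.infinite_univ
    (fun k _ => le_trans (rsum_le_tsum _ _) (le_trans (hrow k) hCn))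
  exact ⟨M, hM2, hM3⟩

lemma wuc_contradiction {Y : Type*} [NormedAddCommGroup Y] [NormedSpace ℝ Y]
    (hY : WeaklySeqComplete Y) (S : ℕ → Y) (C ε : ℝ) (hC : 0 ≤ C) (hε : 0 < ε)
    (hnorm : ∀ k, ε ≤ ‖S k‖)
    (hWUC : ∀ f : Y →L[ℝ] ℝ, ∀ I : Finset ℕ, ∑ k ∈ I, |f (S k)| ≤ C * ‖f‖) : False := by
  classical
  -- the small parameter
  set t : ℝ := min (ε / 4) (ε ^ 2 / (8 * (C + 2 * ε))) with htdef
  have hpos : (0:ℝ) < C + 2 * ε := by linarith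
  have ht0 : 0 < t := lt_min (by linarith) (by positivity)
  have htε : t ≤ ε / 4 := min_le_left _ _
  have ht2 : t * (C + 2 * ε) ≤ ε ^ 2 / 8 := by
    have h1 : t ≤ ε ^ 2 / (8 * (C + 2 * ε)) := min_le_right _ _
    calc t * (C + 2 * ε) ≤ (ε ^ 2 / (8 * (C + 2 * ε))) * (C + 2 * ε) :=
          mul_le_mul_of_nonneg_right h1 hpos.le
      _ = ε ^ 2 / 8 := by field_simp
  -- norming functionals
  have hS0 : ∀ k, S k ≠ 0 := by
    intro k h
    have := hnorm k
    rw [h, norm_zero] at this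
    linarith
  choose f hf1 hf2 using fun k => exists_dual_vector ℝ (S k) (norm_ne_zero_iff.2 (hS0 k))
  have hfS : ∀ k, f k (S k) = ‖S k‖ := fun k => hf2 k
  -- Rosenthal's lemma applied to the matrix |f k (S j)|
  have hrow : ∀ k, ∑' j, ENNReal.ofReal |f k (S j)| ≤ ENNReal.ofReal C := by
    intro k
    rw [ENNReal.tsum_eq_iSup_sum]
    refine iSup_le fun I => ?_
    rw [← ENNReal.ofReal_sum_of_nonneg (fun i _ => abs_nonneg _)]
    refine ENNReal.ofReal_le_ofReal ?_
    calc ∑ j ∈ I, |f k (S j)| ≤ C * ‖f k‖ := hWUC (f k) I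
      _ = C := by rw [hf1 k, mul_one]
  obtain ⟨M, hMinf, hM⟩ := rosenthal (fun k j => ENNReal.ofReal |f k (S j)|)
    (ENNReal.ofReal C) ENNReal.ofReal_ne_top hrow (ENNReal.ofReal t)
    (by simpa using ht0) ENNReal.ofReal_ne_top
  -- the subsequence
  set φ : ℕ → ℕ := fun i => ((hMinf.natEmbedding M) i : ℕ) with hφdef
  have hφinj : Function.Injective φ :=
    fun i j h => (hMinf.natEmbedding M).injective (Subtype.val_injective h)
  have hφM : ∀ i, φ i ∈ M := fun i => ((hMinf.natEmbedding M) i).2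
  set T : ℕ → Y := fun i => S (φ i) with hTdef
  set g : ℕ → Y →L[ℝ] ℝ := fun m => f (φ m) with hgdef
  have hg1 : ∀ m, ‖g m‖ = 1 := fun m => hf1 (φ m)
  have hgT : ∀ m, g m (T m) = ‖T m‖ := fun m => hfS (φ m)
  -- real form of Rosenthal's conclusion
  have hros : ∀ (m : ℕ) (I : Finset ℕ), m ∉ I → ∑ i ∈ I, |g m (T i)| ≤ t := by
    intro m I hm
    have key : ENNReal.ofReal (∑ i ∈ I, |g m (T i)|) ≤ ENNReal.ofReal t := by
      rw [ENNReal.ofReal_sum_of_nonneg (fun i _ => abs_nonneg _)]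
      have h1 : ∑ i ∈ I, ENNReal.ofReal |g m (T i)|
          = ∑ j ∈ I.image φ, ENNReal.ofReal |f (φ m) (S j)| :=
        (Finset.sum_image (s := I) (g := φ)
          (f := fun j => ENNReal.ofReal |f (φ m) (S j)|) (fun x _ y _ h => hφinj h)).symm
      rw [h1]
      have h2 : ∀ j ∈ I.image φ, ENNReal.ofReal |f (φ m) (S j)|
          = (M \ {φ m}).indicator (fun j => ENNReal.ofReal |f (φ m) (S j)|) j := by
        intro j hj
        obtain ⟨i, hiI, rfl⟩ := Finset.mem_image.1 hj
        rw [Set.indicator_of_mem]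
        exact ⟨hφM i, fun h => hm (by obtain rfl : i = m := hφinj (by simpa using h); exact hiI)⟩
      rw [Finset.sum_congr rfl h2]
      exact le_trans (ENNReal.sum_le_tsum _) (hM (φ m) (hφM m))
    have := (ENNReal.ofReal_le_ofReal_iff ht0.le).1 key
    exact this
  -- summability of all the scalar series
  have habs : ∀ h : Y →L[ℝ] ℝ, Summable fun i => |h (T i)| := by
    intro h
    refine summable_of_sum_range_le (fun i => abs_nonneg _) (fun K => ?_) (c := C * ‖h‖)
    calc ∑ i ∈ Finset.range K, |h (T i)|
        = ∑ j ∈ (Finset.range K).image φ, |h (S j)| :=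
          (Finset.sum_image (s := Finset.range K) (g := φ)
            (f := fun j => |h (S j)|) (fun x _ y _ hh => hφinj hh)).symm
      _ ≤ C * ‖h‖ := hWUC h _
  have hsum : ∀ h : Y →L[ℝ] ℝ, Summable fun i => h (T i) := fun h => (habs h).of_abs
  -- the weak limit z of the partial sums
  obtain ⟨z, hz⟩ := hY (fun n => ∑ i ∈ Finset.range n, T i) (by
    intro h
    refine ⟨∑' i, h (T i), ?_⟩
    have := (hsum h).hasSum.tendsto_sum_nat
    simpa [map_sum] using this)
  have hz' : ∀ h : Y →L[ℝ] ℝ, h z = ∑' i, h (T i) := by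
    intro h
    have h1 := hz h
    have h2 := (hsum h).hasSum.tendsto_sum_nat
    have h3 : Filter.Tendsto (fun n => h (∑ i ∈ Finset.range n, T i))
        Filter.atTop (nhds (∑' i, h (T i))) := by simpa [map_sum] using h2
    exact tendsto_nhds_unique h1 h3
  -- lower bound on g m z
  have hgz : ∀ m, ε - t ≤ g m z := by
    intro m
    have h1 : g m z = g m (T m) + ∑' i, if i = m then 0 else g m (T i) := by
      rw [hz' (g m)]
      exact Summable.tsum_eq_add_tsum_ite (hsum (g m)) m
    have habs' : Summable fun i => |if i = m then 0 else g m (T i)| := by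
      refine Summable.of_nonneg_of_le (fun i => abs_nonneg _) (fun i => ?_) (habs (g m))
      by_cases hi : i = m <;> simp [hi, abs_nonneg]
    have h2 : |∑' i, if i = m then 0 else g m (T i)| ≤ t := by
      have hb : ∑' i, |if i = m then 0 else g m (T i)| ≤ t := by
        refine Summable.tsum_le_of_sum_le habs' fun I => ?_
        have he : ∑ i ∈ I, |if i = m then 0 else g m (T i)|
            = ∑ i ∈ I.erase m, |if i = m then 0 else g m (T i)| := by
          refine (Finset.sum_subset (Finset.erase_subset m I) fun x hx hxe => ?_).symm
          have : x = m := by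
            by_contra hxm
            exact hxe (Finset.mem_erase.2 ⟨hxm, hx⟩)
          simp [this]
        rw [he]
        have he2 : ∑ i ∈ I.erase m, |if i = m then 0 else g m (T i)|
            = ∑ i ∈ I.erase m, |g m (T i)| := by
          refine Finset.sum_congr rfl fun i hi => ?_
          rw [if_neg (Finset.mem_erase.1 hi).1]
        rw [he2]
        exact hros m _ (Finset.notMem_erase m I)
      calc |∑' i, if i = m then 0 else g m (T i)|
          ≤ ∑' i, |if i = m then 0 else g m (T i)| := by
            simpa using norm_tsum_le_tsum_norm (f := fun i => if i = m then 0 else g m (T i))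
              (by simpa [Real.norm_eq_abs] using habs')
        _ ≤ t := hb
    have h3 : ε ≤ g m (T m) := by rw [hgT m]; exact hnorm (φ m)
    have h4 : -(t) ≤ ∑' i, if i = m then 0 else g m (T i) := by
      have := abs_le.1 h2
      linarith [this.1]
    have h5 : ε - t ≤ g m (T m) + ∑' i, (if i = m then 0 else g m (T i)) := by linarith
    linarith [h1, h5]
  -- norm bound on z
  have hznorm : ‖z‖ ≤ C := by
    by_cases hzz : z = 0
    · rw [hzz, norm_zero]; exact hC
    · obtain ⟨h, hh1, hh2⟩ := exists_dual_vector ℝ z (norm_ne_zero_iff.2 hzz)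
      have : (h z : ℝ) = ‖z‖ := by exact_mod_cast hh2
      rw [← this, hz' h]
      calc ∑' i, h (T i) ≤ |∑' i, h (T i)| := le_abs_self _
        _ ≤ ∑' i, |h (T i)| := by
            simpa using norm_tsum_le_tsum_norm (f := fun i => h (T i))
              (by simpa [Real.norm_eq_abs] using habs h)
        _ ≤ C := by
            refine Summable.tsum_le_of_sum_le (habs h) fun I => ?_
            calc ∑ i ∈ I, |h (T i)| = ∑ j ∈ I.image φ, |h (S j)| :=
                  (Finset.sum_image (s := I) (g := φ)
                    (f := fun j => |h (S j)|) (fun x _ y _ hh => hφinj hh)).symm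
              _ ≤ C * ‖h‖ := hWUC h _
              _ = C := by rw [hh1, mul_one]
  -- z lies in the closed span of the T i
  have hclos : z ∈ closure (Submodule.span ℝ (Set.range T) : Set Y) := by
    by_contra hzc
    obtain ⟨f₀, u, hfu1, hfu2⟩ := geometric_hahn_banach_closed_point
      ((Submodule.span ℝ (Set.range T)).convex.closure) isClosed_closure hzc
    have hu0 : 0 < u := by
      have := hfu1 0 (subset_closure (Submodule.zero_mem _))
      simpa using this
    have h0 : ∀ i, f₀ (T i) = 0 := by
      intro i
      by_contra hne
      have hr : ∀ r : ℝ, r * f₀ (T i) < u := by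
        intro r
        have hmem : r • T i ∈ (Submodule.span ℝ (Set.range T) : Set Y) :=
          Submodule.smul_mem _ r (Submodule.subset_span (Set.mem_range_self i))
        have := hfu1 _ (subset_closure hmem)
        simpa using this
      have := hr ((u + 1) / f₀ (T i))
      rw [div_mul_cancel₀ _ hne] at this
      linarith
    have hfz : f₀ z = 0 := by
      rw [hz' f₀]
      simp [h0]
    rw [hfz] at hfu2
    linarith
  -- finite approximation of z
  obtain ⟨y, hymem, hyz⟩ := Metric.mem_closure_iff.1 hclos t ht0
  obtain ⟨c, hc⟩ := Finsupp.mem_span_range_iff_exists_finsupp.1 hymem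
  have hy : y = ∑ i ∈ c.support, c i • T i := by
    rw [← hc]; rfl
  have hyb : ‖y‖ ≤ C + t := by
    calc ‖y‖ ≤ ‖z‖ + ‖y - z‖ := by
          have := norm_sub_norm_le y z
          linarith [norm_nonneg (y - z), norm_sub_rev y z ▸ (le_refl ‖y - z‖),
            norm_le_insert' y z]
      _ ≤ C + t := by
          have : ‖y - z‖ ≤ t := by
            rw [norm_sub_rev]
            have := hyz
            rw [dist_eq_norm] at this
            linarith
          linarith
  by_cases hne : c.support.Nonempty
  case neg =>
    -- y = 0
    have hy0 : y = 0 := by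
      rw [hy, Finset.not_nonempty_iff_eq_empty.1 hne, Finset.sum_empty]
    have h1 := hgz 0
    have h2 : |g 0 z| ≤ t := by
      have : g 0 z = g 0 (z - y) := by rw [hy0]; simp
      rw [this]
      calc |g 0 (z - y)| ≤ ‖g 0‖ * ‖z - y‖ := (g 0).le_opNorm _
        _ ≤ 1 * t := by
            rw [hg1]
            have := hyz; rw [dist_eq_norm] at this
            exact mul_le_mul_of_nonneg_left (le_of_lt this) zero_le_one
        _ = t := one_mul t
    have := le_abs_self (g 0 z)
    linarith [abs_le.1 h2]
  case pos =>
    set K : ℝ := c.support.sup' hne fun i => |c i| with hKdef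
    obtain ⟨i₀, hi₀mem, hi₀⟩ := Finset.exists_mem_eq_sup' hne fun i => |c i|
    have hi₀' : K = |c i₀| := by rw [hKdef]; exact hi₀
    have hK0 : 0 ≤ K := by rw [hi₀']; exact abs_nonneg _
    have hKi : ∀ i ∈ c.support, |c i| ≤ K := by
      intro i hi
      rw [hKdef]
      exact Finset.le_sup' (fun i => |c i|) hi
    -- bound (iv) : K * ε ≤ C + t + K * t
    have hiv : K * ε ≤ C + t + K * t := by
      have hsplit : g i₀ y = c i₀ * g i₀ (T i₀) + ∑ i ∈ c.support.erase i₀, c i * g i₀ (T i) := by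
        rw [hy, map_sum]
        rw [← Finset.add_sum_erase _ (fun i => g i₀ (c i • T i)) hi₀mem]
        simp [mul_comm]
      have herase : |∑ i ∈ c.support.erase i₀, c i * g i₀ (T i)| ≤ K * t := by
        calc |∑ i ∈ c.support.erase i₀, c i * g i₀ (T i)|
            ≤ ∑ i ∈ c.support.erase i₀, |c i * g i₀ (T i)| := Finset.abs_sum_le_sum_abs _ _
          _ ≤ ∑ i ∈ c.support.erase i₀, K * |g i₀ (T i)| := by
              refine Finset.sum_le_sum fun i hi => ?_
              rw [abs_mul]
              exact mul_le_mul_of_nonneg_right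
                (hKi i (Finset.mem_of_mem_erase hi)) (abs_nonneg _)
          _ = K * ∑ i ∈ c.support.erase i₀, |g i₀ (T i)| := by rw [Finset.mul_sum]
          _ ≤ K * t := mul_le_mul_of_nonneg_left
              (hros i₀ _ (Finset.notMem_erase i₀ _)) hK0
      have hmain : K * ε ≤ |c i₀ * g i₀ (T i₀)| := by
        rw [abs_mul, ← hi₀']
        have h5 : |g i₀ (T i₀)| = ‖T i₀‖ := by rw [hgT i₀]; exact abs_of_nonneg (norm_nonneg _)
        rw [h5]
        exact mul_le_mul_of_nonneg_left (hnorm (φ i₀)) hK0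
      have hgy : |g i₀ y| ≤ C + t := by
        calc |g i₀ y| ≤ ‖g i₀‖ * ‖y‖ := (g i₀).le_opNorm y
          _ = ‖y‖ := by rw [hg1, one_mul]
          _ ≤ C + t := hyb
      have : |c i₀ * g i₀ (T i₀)| ≤ |g i₀ y| + |∑ i ∈ c.support.erase i₀, c i * g i₀ (T i)| := by
        have : c i₀ * g i₀ (T i₀) = g i₀ y - ∑ i ∈ c.support.erase i₀, c i * g i₀ (T i) := by
          rw [hsplit]; ring
        rw [this]
        exact abs_sub _ _
      linarith
    -- bound (v) : ε - t ≤ K * t + t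
    obtain ⟨m₁, hm₁⟩ : ∃ m, m ∉ c.support := Infinite.exists_notMem_finset c.support
    have hv : ε - t ≤ K * t + t := by
      have h1 := hgz m₁
      have hgy : |g m₁ y| ≤ K * t := by
        rw [hy, map_sum]
        calc |∑ i ∈ c.support, g m₁ (c i • T i)|
            ≤ ∑ i ∈ c.support, |g m₁ (c i • T i)| := Finset.abs_sum_le_sum_abs _ _
          _ ≤ ∑ i ∈ c.support, K * |g m₁ (T i)| := by
              refine Finset.sum_le_sum fun i hi => ?_
              rw [map_smul, smul_eq_mul, abs_mul]
              exact mul_le_mul_of_nonneg_right (hKi i hi) (abs_nonneg _)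
          _ = K * ∑ i ∈ c.support, |g m₁ (T i)| := by rw [Finset.mul_sum]
          _ ≤ K * t := mul_le_mul_of_nonneg_left (hros m₁ _ hm₁) hK0
      have hdz : |g m₁ (z - y)| ≤ t := by
        calc |g m₁ (z - y)| ≤ ‖g m₁‖ * ‖z - y‖ := (g m₁).le_opNorm _
          _ ≤ 1 * t := by
              rw [hg1]
              have := hyz; rw [dist_eq_norm] at this
              exact mul_le_mul_of_nonneg_left (le_of_lt this) zero_le_one
          _ = t := one_mul t
      have : g m₁ z ≤ |g m₁ y| + |g m₁ (z - y)| := by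
        have he : g m₁ z = g m₁ y + g m₁ (z - y) := by rw [map_sub]; ring
        rw [he]
        have := le_abs_self (g m₁ y)
        have := le_abs_self (g m₁ (z - y))
        linarith
      linarith
    -- final contradiction
    have hE0 : K * (ε - t) = K * ε - K * t := by ring
    have hA : K * (ε - t) ≤ C + t := by linarith [hiv, hE0]
    have hB : ε - 2 * t ≤ K * t := by linarith
    have hC2 : (ε - 2 * t) * (ε - t) ≤ (K * t) * (ε - t) :=
      mul_le_mul_of_nonneg_right hB (by linarith)
    have hD : (K * t) * (ε - t) = (K * (ε - t)) * t := by ring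
    have hE : (K * (ε - t)) * t ≤ (C + t) * t := mul_le_mul_of_nonneg_right hA ht0.le
    have hF : (C + t) * t ≤ (C + 2 * ε) * t :=
      mul_le_mul_of_nonneg_right (by linarith) ht0.le
    have hF' : (C + 2 * ε) * t = t * (C + 2 * ε) := mul_comm _ _
    have hH : (ε - 2 * t) * (ε - t) = ε ^ 2 - 3 * (t * ε) + 2 * t ^ 2 := by ring
    have hI : t * ε ≤ ε / 4 * ε := mul_le_mul_of_nonneg_right htε hε.le
    have hI' : ε / 4 * ε = ε ^ 2 / 4 := by ring
    have hsq : 0 ≤ t ^ 2 := sq_nonneg t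
    have hsq2 : 0 < ε ^ 2 := by positivity
    linarith [hC2, hD, hE, hF, hF', hH, hI, hI', ht2, hsq, hsq2]


lemma semivarIco_mono (F : ℝ → X →L[ℝ] Y) (t : ℝ) {δ δ' : ℝ} (h : δ ≤ δ') :
    semivarIco (t - δ) t F ≤ semivarIco (t - δ') t F := by
  unfold semivarIco
  refine iSup₂_le fun s hs => ?_
  have h1 : s ∈ Set.Ico (t - δ') t := ⟨le_trans (by linarith) hs.1, hs.2⟩
  exact le_trans (semivar_mono_left F (by linarith : t - δ' ≤ t - δ))
    (le_iSup₂_of_le s h1 le_rfl)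

lemma semivarIoc_mono (F : ℝ → X →L[ℝ] Y) (t : ℝ) {δ δ' : ℝ} (h : δ ≤ δ') :
    semivarIoc t (t + δ) F ≤ semivarIoc t (t + δ') F := by
  unfold semivarIoc
  refine iSup₂_le fun s hs => ?_
  have h1 : s ∈ Set.Ioc t (t + δ') := ⟨hs.1, by linarith [hs.2]⟩
  exact le_trans (semivar_mono_right F (by linarith : t + δ ≤ t + δ'))
    (le_iSup₂_of_le s h1 le_rfl)

lemma not_forall_left (hY : WeaklySeqComplete Y) (a b : ℝ) (F : ℝ → X →L[ℝ] Y)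
    (hF : semivar a b F < ⊤) (t : ℝ) (ht : t ∈ Set.Ioc a b) (ε : ℝ) (hε : 0 < ε)
    (h : ∀ δ : ℝ, 0 < δ → ENNReal.ofReal ε < semivarIco (t - δ) t F) : False := by
  have hat : a < t := ht.1
  have key : ∀ s : ℝ, s ∈ Set.Ico a t →
      ∃ p : ℝ × Y, p.1 ∈ Set.Ico a t ∧ p.2 ∈ Sums F s p.1 ∧ ε < ‖p.2‖ := by
    intro s hs
    have hδ : 0 < t - s := by linarith [hs.2]
    have h1 := h (t - s) hδ
    rw [show t - (t - s) = s by ring] at h1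
    unfold semivarIco at h1
    rw [lt_iSup_iff] at h1
    obtain ⟨s', h1⟩ := h1
    rw [lt_iSup_iff] at h1
    obtain ⟨hs', h1⟩ := h1
    rw [semivar_eq_biSup] at h1
    rw [lt_iSup_iff] at h1
    obtain ⟨y, h1⟩ := h1
    rw [lt_iSup_iff] at h1
    obtain ⟨hy, h1⟩ := h1
    refine ⟨(s', y), ⟨le_trans hs.1 hs'.1, hs'.2⟩, hy, ?_⟩
    by_contra hle
    exact absurd h1 (not_lt.2 (ENNReal.ofReal_le_ofReal (le_of_not_gt hle)))
  choose next h1 h2 h3 using key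
  let seq : ℕ → {s : ℝ // s ∈ Set.Ico a t} := fun n =>
    Nat.rec ⟨a, ⟨le_refl a, hat⟩⟩ (fun _ q => ⟨(next q.1 q.2).1, h1 q.1 q.2⟩) n
  let s : ℕ → ℝ := fun k => (seq k).1
  let S : ℕ → Y := fun k => (next (seq k).1 (seq k).2).2
  have hmem : ∀ k, s k ∈ Set.Ico a t := fun k => (seq k).2
  have hSk : ∀ k, S k ∈ Sums F (s k) (s (k + 1)) := fun k => h2 (seq k).1 (seq k).2
  have hSnorm : ∀ k, ε < ‖S k‖ := fun k => h3 (seq k).1 (seq k).2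
  have hs0 : s 0 = a := rfl
  set C : ℝ := (semivar a b F).toReal with hCdef
  have hC0 : 0 ≤ C := ENNReal.toReal_nonneg
  have hWUC : ∀ f : Y →L[ℝ] ℝ, ∀ I : Finset ℕ, ∑ k ∈ I, |f (S k)| ≤ C * ‖f‖ := by
    intro f I
    obtain ⟨K, hIK⟩ := Finset.exists_nat_subset_range I
    classical
    set σ : ℕ → ℝ := fun k => if k ∈ I then (if 0 ≤ f (S k) then 1 else -1) else 0 with hσ
    have hσ1 : ∀ k, |σ k| ≤ 1 := by
      intro k
      by_cases hk : k ∈ I <;> by_cases hk' : 0 ≤ f (S k) <;> simp [hσ, hk, hk']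
    set w : Y := ∑ k ∈ Finset.range K, σ k • S k with hwdef
    have hw : w ∈ Sums F a b := by
      have hchain := sums_chain F s (fun k => σ k • S k) K
        (fun k _ => sums_smul F (hσ1 k) (hSk k))
      rw [hs0] at hchain
      have hpad : (0 : Y) ∈ Sums F (s K) b :=
        sums_zero F (le_trans (le_of_lt (hmem K).2) ht.2)
      simpa using sums_append F hchain hpad
    have hwnorm : ‖w‖ ≤ C := by
      have hle := sums_norm_le F hw
      have h2' := ENNReal.toReal_mono hF.ne hle
      rwa [ENNReal.toReal_ofReal (norm_nonneg w)] at h2'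
    have hsum1 : ∑ k ∈ I, |f (S k)| = ∑ k ∈ I, σ k * f (S k) := by
      refine Finset.sum_congr rfl fun k hk => ?_
      by_cases hk' : 0 ≤ f (S k)
      · simp [hσ, hk, hk', abs_of_nonneg hk']
      · simp [hσ, hk, hk', abs_of_neg (lt_of_not_ge hk')]
    have hsum2 : ∑ k ∈ I, σ k * f (S k) = ∑ k ∈ Finset.range K, σ k * f (S k) :=
      Finset.sum_subset hIK (fun k _ hkI => by simp [hσ, hkI])
    have hsum3 : f w = ∑ k ∈ Finset.range K, σ k * f (S k) := by
      rw [hwdef, map_sum]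
      exact Finset.sum_congr rfl fun k _ => by rw [map_smul, smul_eq_mul]
    calc ∑ k ∈ I, |f (S k)| = f w := by rw [hsum1, hsum2, hsum3]
      _ ≤ |f w| := le_abs_self _
      _ ≤ ‖f‖ * ‖w‖ := f.le_opNorm w
      _ ≤ ‖f‖ * C := mul_le_mul_of_nonneg_left hwnorm (norm_nonneg f)
      _ = C * ‖f‖ := mul_comm _ _
  exact wuc_contradiction hY S C ε hC0 hε (fun k => le_of_lt (hSnorm k)) hWUC

lemma not_forall_right (hY : WeaklySeqComplete Y) (a b : ℝ) (F : ℝ → X →L[ℝ] Y)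
    (hF : semivar a b F < ⊤) (t : ℝ) (ht : t ∈ Set.Ico a b) (ε : ℝ) (hε : 0 < ε)
    (h : ∀ δ : ℝ, 0 < δ → ENNReal.ofReal ε < semivarIoc t (t + δ) F) : False := by
  have htb : t < b := ht.2
  have key : ∀ s : ℝ, s ∈ Set.Ioc t b →
      ∃ p : ℝ × Y, p.1 ∈ Set.Ioc t b ∧ p.2 ∈ Sums F p.1 s ∧ ε < ‖p.2‖ := by
    intro s hs
    have hδ : 0 < s - t := by linarith [hs.1]
    have h1 := h (s - t) hδ
    rw [show t + (s - t) = s by ring] at h1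
    unfold semivarIoc at h1
    rw [lt_iSup_iff] at h1
    obtain ⟨s', h1⟩ := h1
    rw [lt_iSup_iff] at h1
    obtain ⟨hs', h1⟩ := h1
    rw [semivar_eq_biSup] at h1
    rw [lt_iSup_iff] at h1
    obtain ⟨y, h1⟩ := h1
    rw [lt_iSup_iff] at h1
    obtain ⟨hy, h1⟩ := h1
    refine ⟨(s', y), ⟨hs'.1, le_trans hs'.2 hs.2⟩, hy, ?_⟩
    by_contra hle
    exact absurd h1 (not_lt.2 (ENNReal.ofReal_le_ofReal (le_of_not_gt hle)))
  choose next h1 h2 h3 using key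
  let seq : ℕ → {s : ℝ // s ∈ Set.Ioc t b} := fun n =>
    Nat.rec ⟨b, ⟨htb, le_refl b⟩⟩ (fun _ q => ⟨(next q.1 q.2).1, h1 q.1 q.2⟩) n
  let s : ℕ → ℝ := fun k => (seq k).1
  let S : ℕ → Y := fun k => (next (seq k).1 (seq k).2).2
  have hmem : ∀ k, s k ∈ Set.Ioc t b := fun k => (seq k).2
  have hSk : ∀ k, S k ∈ Sums F (s (k + 1)) (s k) := fun k => h2 (seq k).1 (seq k).2
  have hSnorm : ∀ k, ε < ‖S k‖ := fun k => h3 (seq k).1 (seq k).2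
  have hs0 : s 0 = b := rfl
  set C : ℝ := (semivar a b F).toReal with hCdef
  have hC0 : 0 ≤ C := ENNReal.toReal_nonneg
  have hWUC : ∀ f : Y →L[ℝ] ℝ, ∀ I : Finset ℕ, ∑ k ∈ I, |f (S k)| ≤ C * ‖f‖ := by
    intro f I
    obtain ⟨K, hIK⟩ := Finset.exists_nat_subset_range I
    classical
    set σ : ℕ → ℝ := fun k => if k ∈ I then (if 0 ≤ f (S k) then 1 else -1) else 0 with hσ
    have hσ1 : ∀ k, |σ k| ≤ 1 := by
      intro k
      by_cases hk : k ∈ I <;> by_cases hk' : 0 ≤ f (S k) <;> simp [hσ, hk, hk']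
    set w : Y := ∑ k ∈ Finset.range K, σ k • S k with hwdef
    have hw : w ∈ Sums F a b := by
      have hchain := sums_chain' F s (fun k => σ k • S k) K
        (fun k _ => sums_smul F (hσ1 k) (hSk k))
      rw [hs0] at hchain
      have hpad : (0 : Y) ∈ Sums F a (s K) :=
        sums_zero F (le_trans ht.1 (le_of_lt (hmem K).1))
      simpa using sums_append F hpad hchain
    have hwnorm : ‖w‖ ≤ C := by
      have hle := sums_norm_le F hw
      have h2' := ENNReal.toReal_mono hF.ne hle
      rwa [ENNReal.toReal_ofReal (norm_nonneg w)] at h2'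
    have hsum1 : ∑ k ∈ I, |f (S k)| = ∑ k ∈ I, σ k * f (S k) := by
      refine Finset.sum_congr rfl fun k hk => ?_
      by_cases hk' : 0 ≤ f (S k)
      · simp [hσ, hk, hk', abs_of_nonneg hk']
      · simp [hσ, hk, hk', abs_of_neg (lt_of_not_ge hk')]
    have hsum2 : ∑ k ∈ I, σ k * f (S k) = ∑ k ∈ Finset.range K, σ k * f (S k) :=
      Finset.sum_subset hIK (fun k _ hkI => by simp [hσ, hkI])
    have hsum3 : f w = ∑ k ∈ Finset.range K, σ k * f (S k) := by
      rw [hwdef, map_sum]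
      exact Finset.sum_congr rfl fun k _ => by rw [map_smul, smul_eq_mul]
    calc ∑ k ∈ I, |f (S k)| = f w := by rw [hsum1, hsum2, hsum3]
      _ ≤ |f w| := le_abs_self _
      _ ≤ ‖f‖ * ‖w‖ := f.le_opNorm w
      _ ≤ ‖f‖ * C := mul_le_mul_of_nonneg_left hwnorm (norm_nonneg f)
      _ = C * ‖f‖ := mul_comm _ _
  exact wuc_contradiction hY S C ε hC0 hε (fun k => le_of_lt (hSnorm k)) hWUC


end SV15

/-- if `Y` is weakly sequentially complete, then every `F : [a,b] → L(X,Y)` of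
bounded semivariation satisfies `lim_{δ→0+} SV_{[t−δ,t)}(F) = 0` for every `t ∈ (a,b]` and
`lim_{δ→0+} SV_{(t,t+δ]}(F) = 0` for every `t ∈ [a,b)`. -/
theorem semivar_halfclosed_limits_of_weaklySeqComplete
    {X Y : Type*} [NormedAddCommGroup X] [NormedSpace ℝ X] [CompleteSpace X]
    [NormedAddCommGroup Y] [NormedSpace ℝ Y] [CompleteSpace Y]
    (hY : WeaklySeqComplete Y)
    (a b : ℝ) (hab : a < b) (F : ℝ → X →L[ℝ] Y) (hF : semivar a b F < ⊤) :
    (∀ t ∈ Set.Ioc a b,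
      Filter.Tendsto (fun δ : ℝ => semivarIco (t - δ) t F) (𝓝[>] 0) (𝓝 0)) ∧
    (∀ t ∈ Set.Ico a b,
      Filter.Tendsto (fun δ : ℝ => semivarIoc t (t + δ) F) (𝓝[>] 0) (𝓝 0)) := by
  constructor
  · intro t ht
    rw [ENNReal.tendsto_nhds_zero]
    intro ε hε
    have key : ∃ δ₀ : ℝ, 0 < δ₀ ∧ semivarIco (t - δ₀) t F ≤ ε := by
      by_contra hcon
      push_neg at hcon
      set ε' : ℝ := (min ε 1).toReal with hε'def
      have hmin0 : (0 : ENNReal) < min ε 1 := lt_min hε zero_lt_one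
      have hmintop : min ε 1 ≠ ⊤ :=
        ne_top_of_le_ne_top ENNReal.one_ne_top (min_le_right _ _)
      have hε'0 : 0 < ε' := ENNReal.toReal_pos hmin0.ne' hmintop
      have hofReal : ENNReal.ofReal ε' = min ε 1 := by
        rw [hε'def, ENNReal.ofReal_toReal hmintop]
      refine SV15.not_forall_left hY a b F hF t ht ε' hε'0 fun δ hδ => ?_
      calc ENNReal.ofReal ε' = min ε 1 := hofReal
        _ ≤ ε := min_le_left _ _
        _ < semivarIco (t - δ) t F := hcon δ hδ
    obtain ⟨δ₀, hδ₀, hval⟩ := key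
    filter_upwards [Ioc_mem_nhdsGT_of_mem (Set.mem_Ico.2 ⟨le_refl (0:ℝ), hδ₀⟩)] with δ hδ
    exact le_trans (SV15.semivarIco_mono F t hδ.2) hval
  · intro t ht
    rw [ENNReal.tendsto_nhds_zero]
    intro ε hε
    have key : ∃ δ₀ : ℝ, 0 < δ₀ ∧ semivarIoc t (t + δ₀) F ≤ ε := by
      by_contra hcon
      push_neg at hcon
      set ε' : ℝ := (min ε 1).toReal with hε'def
      have hmin0 : (0 : ENNReal) < min ε 1 := lt_min hε zero_lt_one
      have hmintop : min ε 1 ≠ ⊤ :=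
        ne_top_of_le_ne_top ENNReal.one_ne_top (min_le_right _ _)
      have hε'0 : 0 < ε' := ENNReal.toReal_pos hmin0.ne' hmintop
      have hofReal : ENNReal.ofReal ε' = min ε 1 := by
        rw [hε'def, ENNReal.ofReal_toReal hmintop]
      refine SV15.not_forall_right hY a b F hF t ht ε' hε'0 fun δ hδ => ?_
      calc ENNReal.ofReal ε' = min ε 1 := hofReal
        _ ≤ ε := min_le_left _ _
        _ < semivarIoc t (t + δ) F := hcon δ hδ
    obtain ⟨δ₀, hδ₀, hval⟩ := key
    filter_upwards [Ioc_mem_nhdsGT_of_mem (Set.mem_Ico.2 ⟨le_refl (0:ℝ), hδ₀⟩)] with δ hδ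
    exact le_trans (SV15.semivarIoc_mono F t hδ.2) hval
end

section
/- Let Y be a weakly sequentially complete real Banach space and let F : [a,b] → L(X,Y) be of bounded semivariation on [a,b]. Then F is continuous (in operator norm) at all points of [a,b] except possibly a countable set. -/
open Filter Topology

/-- Phillips-type gliding hump lemma. -/
lemma phillips_core (a : ℕ → ℕ → ℝ) (habs : ∀ j, Summable fun k => |a j k|)
    (h0 : ∀ A : Set ℕ, Tendsto (fun j => ∑' k, A.indicator (a j) k) atTop (𝓝 0))
    (m : ℕ → ℕ) (hm : StrictMono m) (δ : ℝ) (hδ : 0 < δ)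
    (hd : ∀ j, δ ≤ |a j (m j)|) : False := by
  -- singleton convergence
  have hsing : ∀ x : ℕ, Tendsto (fun j => a j x) atTop (𝓝 0) := by
    intro x
    have h := h0 {x}
    have : (fun j => ∑' k, ({x} : Set ℕ).indicator (a j) k) = fun j => a j x := by
      funext j
      rw [tsum_eq_single x]
      · simp
      · intro b' hb'
        simp [Set.indicator_apply, hb']
    rwa [this] at h
  -- the "next index" choice
  have hnext : ∀ p : ℕ, ∃ J, p < J ∧ (∑ k ∈ Finset.range (m p + 1), |a J k|) ≤ δ/8 ∧
      ∑' k, |a p (k + m J)| ≤ δ/8 := by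
    intro p
    have e1 : ∀ᶠ J in atTop, (∑ k ∈ Finset.range (m p + 1), |a J k|) ≤ δ/8 := by
      have ht : Tendsto (fun J => ∑ k ∈ Finset.range (m p + 1), |a J k|) atTop (𝓝 0) := by
        have : Tendsto (fun J => ∑ k ∈ Finset.range (m p + 1), |a J k|) atTop
            (𝓝 (∑ k ∈ Finset.range (m p + 1), (0:ℝ))) := by
          apply tendsto_finset_sum
          intro k _
          simpa using (hsing k).abs
        simpa using this
      exact Filter.Tendsto.eventually_le_const (by linarith) ht
    have e2 : ∀ᶠ J in atTop, ∑' k, |a p (k + m J)| ≤ δ/8 := by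
      have ht : Tendsto (fun N => ∑' k, |a p (k + N)|) atTop (𝓝 0) :=
        tendsto_sum_nat_add (fun k => |a p k|)
      have ht2 : Tendsto (fun J => ∑' k, |a p (k + m J)|) atTop (𝓝 0) :=
        ht.comp hm.tendsto_atTop
      exact Filter.Tendsto.eventually_le_const (by linarith) ht2
    have e3 : ∀ᶠ J in atTop, p < J := eventually_gt_atTop p
    exact ((e3.and (e1.and e2)).exists).imp (fun J h => ⟨h.1, h.2.1, h.2.2⟩)
  -- construct the index sequence
  set next : ℕ → ℕ := fun p => Classical.choose (hnext p) with hnextdef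
  have hnextspec : ∀ p, p < next p ∧ (∑ k ∈ Finset.range (m p + 1), |a (next p) k|) ≤ δ/8 ∧
      ∑' k, |a p (k + m (next p))| ≤ δ/8 := fun p => Classical.choose_spec (hnext p)
  set j : ℕ → ℕ := fun i => next^[i] 0 with hjdef
  have hjsucc : ∀ i, j (i+1) = next (j i) := by
    intro i; simp only [hjdef, Function.iterate_succ_apply']
  have hjmono : StrictMono j := by
    apply strictMono_nat_of_lt_succ
    intro i; rw [hjsucc]; exact (hnextspec (j i)).1
  have hA : ∀ i, (∑ k ∈ Finset.range (m (j i) + 1), |a (j (i+1)) k|) ≤ δ/8 := by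
    intro i; rw [hjsucc]; exact (hnextspec (j i)).2.1
  have hB : ∀ i, ∑' k, |a (j i) (k + m (j (i+1)))| ≤ δ/8 := by
    intro i; rw [hjsucc]; exact (hnextspec (j i)).2.2
  set e : ℕ → ℕ := fun i => m (j i) with hedef
  have hemono : StrictMono e := hm.comp hjmono
  set A : Set ℕ := Set.range e with hAdef
  -- the tsum over A for measure j i
  have habs' : ∀ i, Summable fun l => |a (j i) (e l)| := by
    intro i
    exact ((habs (j i)).comp_injective hemono.injective)
  have hsum' : ∀ i, Summable fun l => a (j i) (e l) := by
    intro i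
    exact (habs' i).of_abs
  have hrepr : ∀ i, ∑' k, A.indicator (a (j i)) k = ∑' l, a (j i) (e l) := by
    intro i
    rw [← Function.Injective.tsum_eq hemono.injective
      (f := A.indicator (a (j i))) Set.support_indicator_subset]
    congr 1
    funext l
    exact Set.indicator_of_mem (Set.mem_range_self l) _
  -- decomposition bound
  have hlower : ∀ i, 3*δ/4 ≤ |∑' k, A.indicator (a (j (i+1))) k| := by
    intro i
    rw [hrepr (i+1)]
    set g : ℕ → ℝ := fun l => a (j (i+1)) (e l) with hgdef
    have hgsum : Summable g := hsum' (i+1)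
    have hsplit : ∑' l, g l = ∑ l ∈ Finset.range (i+2), g l + ∑' l, g (l + (i+2)) :=
      (Summable.sum_add_tsum_nat_add (i+2) hgsum).symm
    have hpast : |∑ l ∈ Finset.range (i+1), g l| ≤ δ/8 := by
      have h1 : |∑ l ∈ Finset.range (i+1), g l| ≤ ∑ l ∈ Finset.range (i+1), |g l| :=
        Finset.abs_sum_le_sum_abs _ _
      have h2 : ∑ l ∈ Finset.range (i+1), |g l|
          = ∑ k ∈ (Finset.range (i+1)).image e, |a (j (i+1)) k| := by
        rw [Finset.sum_image (fun x _ y _ h => hemono.injective h)]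
      have h3 : (Finset.range (i+1)).image e ⊆ Finset.range (m (j i) + 1) := by
        intro k hk
        simp only [Finset.mem_image, Finset.mem_range] at hk ⊢
        obtain ⟨l, hl, rfl⟩ := hk
        have h5 : e l ≤ e i := hemono.monotone (Nat.lt_succ_iff.mp hl)
        have h6 : e i = m (j i) := rfl
        omega
      have h4 : ∑ k ∈ (Finset.range (i+1)).image e, |a (j (i+1)) k|
          ≤ ∑ k ∈ Finset.range (m (j i) + 1), |a (j (i+1)) k| :=
        Finset.sum_le_sum_of_subset_of_nonneg h3 (fun _ _ _ => abs_nonneg _)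
      calc |∑ l ∈ Finset.range (i+1), g l| ≤ ∑ l ∈ Finset.range (i+1), |g l| := h1
        _ = _ := h2
        _ ≤ _ := h4
        _ ≤ δ/8 := hA i
    have hdiag : δ ≤ |g (i+1)| := hd (j (i+1))
    have htail : |∑' l, g (l + (i+2))| ≤ δ/8 := by
      have hsumf : Summable (fun l => |g (l + (i+2))|) := by
        have := (habs' (i+1)).comp_injective (add_left_injective (i+2))
        exact this
      have h1 : |∑' l, g (l + (i+2))| ≤ ∑' l, |g (l + (i+2))| := by
        simpa [Real.norm_eq_abs] using
          norm_tsum_le_tsum_norm (by simpa [Real.norm_eq_abs] using hsumf :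
            Summable fun l => ‖g (l + (i+2))‖)
      have h2 : ∑' l, |g (l + (i+2))| ≤ ∑' k, |a (j (i+1)) (k + m (j (i+2)))| := by
        apply Summable.tsum_le_tsum_of_inj (fun l => e (l + (i+2)) - m (j (i+2)))
        · intro l l' h
          have hle : ∀ l'', m (j (i+2)) ≤ e (l'' + (i+2)) := fun l'' =>
            hemono.monotone (by omega)
          have := congrArg (· + m (j (i+2))) h
          simp only [Nat.sub_add_cancel (hle l), Nat.sub_add_cancel (hle l')] at this
          exact Nat.add_right_cancel (hemono.injective this)
        · intro c _; exact abs_nonneg _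
        · intro l
          have hle : m (j (i+2)) ≤ e (l + (i+2)) := hemono.monotone (by omega)
          rw [Nat.sub_add_cancel hle]
        · exact hsumf
        · exact (habs (j (i+1))).comp_injective (fun k k' h => by omega)
      calc |∑' l, g (l + (i+2))| ≤ ∑' l, |g (l + (i+2))| := h1
        _ ≤ ∑' k, |a (j (i+1)) (k + m (j (i+2)))| := h2
        _ ≤ δ/8 := hB (i+1)
    have hdec : ∑' l, g l = (∑ l ∈ Finset.range (i+1), g l) + g (i+1) + ∑' l, g (l + (i+2)) := by
      rw [hsplit, Finset.sum_range_succ]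
    rw [hdec]
    have := abs_sub_abs_le_abs_sub ((∑ l ∈ Finset.range (i+1), g l) + g (i+1) + ∑' l, g (l + (i+2))) ((∑ l ∈ Finset.range (i+1), g l) + ∑' l, g (l + (i+2)))
    have habs2 : |(∑ l ∈ Finset.range (i+1), g l) + ∑' l, g (l + (i+2))| ≤ δ/8 + δ/8 := by
      calc |(∑ l ∈ Finset.range (i+1), g l) + ∑' l, g (l + (i+2))|
          ≤ |∑ l ∈ Finset.range (i+1), g l| + |∑' l, g (l + (i+2))| := abs_add_le _ _
        _ ≤ δ/8 + δ/8 := add_le_add hpast htail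
    have hsub : ((∑ l ∈ Finset.range (i+1), g l) + g (i+1) + ∑' l, g (l + (i+2)))
        - ((∑ l ∈ Finset.range (i+1), g l) + ∑' l, g (l + (i+2))) = g (i+1) := by ring
    have h5 : |g (i+1)| - |(∑ l ∈ Finset.range (i+1), g l) + ∑' l, g (l + (i+2))|
        ≤ |(∑ l ∈ Finset.range (i+1), g l) + g (i+1) + ∑' l, g (l + (i+2))| := by
      have := abs_sub_abs_le_abs_sub (g (i+1)) (-((∑ l ∈ Finset.range (i+1), g l) + ∑' l, g (l + (i+2))))
      rw [abs_neg, sub_neg_eq_add] at this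
      calc |g (i+1)| - |(∑ l ∈ Finset.range (i+1), g l) + ∑' l, g (l + (i+2))|
          ≤ |g (i+1) + ((∑ l ∈ Finset.range (i+1), g l) + ∑' l, g (l + (i+2)))| := this
        _ = |(∑ l ∈ Finset.range (i+1), g l) + g (i+1) + ∑' l, g (l + (i+2))| := by
            congr 1; ring
    linarith
  -- final contradiction
  have htends : Tendsto (fun i => ∑' k, A.indicator (a (j (i+1))) k) atTop (𝓝 0) := by
    have hsm : StrictMono (fun i => j (i+1)) := fun x y h => hjmono (by omega)
    exact (h0 A).comp hsm.tendsto_atTop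
  have : ∀ᶠ i in atTop, |∑' k, A.indicator (a (j (i+1))) k| < 3*δ/4 := by
    have := htends.abs
    simp only [abs_zero] at this
    exact this.eventually_lt_const (by linarith)
  obtain ⟨i, hi⟩ := this.exists
  exact absurd (hlower i) (not_le.mpr hi)

lemma wsc_core {Y : Type*} [NormedAddCommGroup Y] [NormedSpace ℝ Y]
    (hY : WeaklySeqComplete Y) (u : ℕ → Y) (M : ℝ)
    (hM : ∀ (n : ℕ) (θ : ℕ → ℝ), (∀ k, |θ k| ≤ 1) →
      ‖∑ k ∈ Finset.range n, θ k • u k‖ ≤ M)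
    (ε : ℝ) (hε : 0 < ε) (hu : ∀ k, ε ≤ ‖u k‖) : False := by
  classical
  -- absolute scalar sums are bounded
  have habsf : ∀ (f : Y →L[ℝ] ℝ) (n : ℕ), ∑ k ∈ Finset.range n, |f (u k)| ≤ M * ‖f‖ := by
    intro f n
    set θ : ℕ → ℝ := fun k => if f (u k) < 0 then -1 else 1 with hθdef
    have hθ : ∀ k, |θ k| ≤ 1 := by
      intro k; by_cases h : f (u k) < 0 <;> simp [hθdef, h]
    have h1 : (∑ k ∈ Finset.range n, |f (u k)|) = f (∑ k ∈ Finset.range n, θ k • u k) := by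
      rw [map_sum]
      apply Finset.sum_congr rfl
      intro k _
      rw [map_smul]
      by_cases h : f (u k) < 0
      · simp [hθdef, h, abs_of_neg h]
      · simp [hθdef, h, abs_of_nonneg (not_lt.mp h)]
    rw [h1]
    calc f (∑ k ∈ Finset.range n, θ k • u k) ≤ |f (∑ k ∈ Finset.range n, θ k • u k)| :=
          le_abs_self _
      _ ≤ ‖f‖ * ‖∑ k ∈ Finset.range n, θ k • u k‖ := f.le_opNorm _
      _ ≤ ‖f‖ * M := by
          have := hM n θ hθ
          exact mul_le_mul_of_nonneg_left this (norm_nonneg f)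
      _ = M * ‖f‖ := mul_comm _ _
  have hsummf : ∀ f : Y →L[ℝ] ℝ, Summable (fun k => |f (u k)|) := fun f =>
    summable_of_sum_range_le (fun k => abs_nonneg _) (habsf f)
  -- construct weak limits of subseries
  have hmu : ∀ A : Set ℕ, ∃ z : Y, ∀ f : Y →L[ℝ] ℝ,
      HasSum (fun k => A.indicator (fun k => f (u k)) k) (f z) := by
    intro A
    set y : ℕ → Y := fun n => ∑ k ∈ Finset.range n, A.indicator u k with hydef
    have hsumh : ∀ f : Y →L[ℝ] ℝ, Summable (fun k => A.indicator (fun k => f (u k)) k) := by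
      intro f
      apply Summable.of_abs
      apply Summable.of_nonneg_of_le (fun k => abs_nonneg _) _ (hsummf f)
      intro k
      by_cases h : k ∈ A <;> simp [Set.indicator_apply, h, abs_nonneg]
    have hfy : ∀ (f : Y →L[ℝ] ℝ) (n : ℕ),
        f (y n) = ∑ k ∈ Finset.range n, A.indicator (fun k => f (u k)) k := by
      intro f n
      rw [hydef]
      simp only [map_sum]
      apply Finset.sum_congr rfl
      intro k _
      by_cases h : k ∈ A <;> simp [Set.indicator_apply, h]
    obtain ⟨z, hz⟩ := hY y (by
      intro f
      refine ⟨∑' k, A.indicator (fun k => f (u k)) k, ?_⟩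
      have := (hsumh f).hasSum.tendsto_sum_nat
      simpa only [← hfy f] using this)
    refine ⟨z, fun f => ?_⟩
    have h1 := (hsumh f).hasSum.tendsto_sum_nat
    have h2 := hz f
    simp only [hfy f] at h2
    have : f z = ∑' k, A.indicator (fun k => f (u k)) k := tendsto_nhds_unique h2 h1
    rw [this]
    exact (hsumh f).hasSum
  set μ : Set ℕ → Y := fun A => Classical.choose (hmu A) with hμdef
  have hμspec : ∀ (A : Set ℕ) (f : Y →L[ℝ] ℝ),
      HasSum (fun k => A.indicator (fun k => f (u k)) k) (f (μ A)) := fun A =>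
    Classical.choose_spec (hmu A)
  -- norming functionals
  have hfk : ∀ k, ∃ g : Y →L[ℝ] ℝ, ‖g‖ = 1 ∧ g (u k) = ‖u k‖ := by
    intro k
    apply exists_dual_vector ℝ (u k)
    intro h
    have := hu k
    rw [h] at this
    exact absurd this (not_le.mpr hε)
  choose fk hfk1 hfk2 using hfk
  -- separable closed subspace containing everything
  set Zsub : Submodule ℝ Y := (Submodule.span ℝ (Set.range u)).topologicalClosure with hZdef
  have huZ : ∀ k, u k ∈ Zsub :=
    fun k => Submodule.le_topologicalClosure _ (Submodule.subset_span (Set.mem_range_self k))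
  have hZclosed : IsClosed (Zsub : Set Y) := Submodule.isClosed_topologicalClosure _
  have hZsep : TopologicalSpace.IsSeparable (Zsub : Set Y) := by
    have h1 : TopologicalSpace.IsSeparable (Set.range u) :=
      (Set.countable_range u).isSeparable
    have h2 := h1.span (R := ℝ)
    have h3 := h2.closure
    rwa [hZdef, Submodule.topologicalClosure_coe]
  -- membership of the weak limits
  have hmem : ∀ A : Set ℕ, μ A ∈ Zsub := by
    intro A
    by_contra hcon
    obtain ⟨f, c, hfc, hcf⟩ :=
      geometric_hahn_banach_closed_point (Zsub.convex) hZclosed hcon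
    have hf0 : ∀ z ∈ Zsub, f z = 0 := by
      intro z hz
      by_contra hfz
      have hmem2 : ((c + 1) / f z) • z ∈ Zsub := Zsub.smul_mem _ hz
      have := hfc _ hmem2
      rw [map_smul] at this
      simp only [smul_eq_mul] at this
      rw [div_mul_cancel₀ _ hfz] at this
      have h0c : (0:ℝ) < c := by
        have := hfc 0 (Zsub.zero_mem)
        simpa using this
      linarith
    have hfu : ∀ k, f (u k) = 0 := fun k => hf0 _ (huZ k)
    have : f (μ A) = 0 := by
      have h1 := hμspec A f
      have h2 : (fun k => A.indicator (fun k => f (u k)) k) = fun _ => (0:ℝ) := by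
        funext k
        by_cases h : k ∈ A <;> simp [Set.indicator_apply, h, hfu]
      rw [h2] at h1
      have h3 : Tendsto (fun n : ℕ => ∑ _k ∈ Finset.range n, (0:ℝ)) atTop (𝓝 0) := by
        simpa using (tendsto_const_nhds : Tendsto (fun _ : ℕ => (0:ℝ)) atTop (𝓝 0))
      exact tendsto_nhds_unique h1.tendsto_sum_nat h3
    have h0c : (0:ℝ) < c := by
      have := hfc 0 (Zsub.zero_mem)
      simpa using this
    rw [this] at hcf
    linarith
  -- countable dense sequence
  obtain ⟨cset, hcc, hcsub⟩ := hZsep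
  have hcne : cset.Nonempty := by
    rcases Set.eq_empty_or_nonempty cset with h | h
    · exfalso
      have := hcsub (Zsub.zero_mem)
      rw [h] at this
      simpa using this
    · exact h
  obtain ⟨d, hd⟩ := hcc.exists_eq_range hcne
  have hdense : ∀ z ∈ Zsub, ∀ η > (0:ℝ), ∃ i, ‖z - d i‖ < η := by
    intro z hz η hη
    have hzc : z ∈ closure (Set.range d) := by rw [← hd]; exact hcsub hz
    obtain ⟨w, hw, hdist⟩ := Metric.mem_closure_iff.mp hzc η hη
    obtain ⟨i, rfl⟩ := hw
    exact ⟨i, by rwa [← dist_eq_norm]⟩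
  -- diagonal subsequence on the dense set
  have hdiagseq : ∃ (φ : ℕ → ℕ) (L : ℕ → ℝ), StrictMono φ ∧
      ∀ i, Tendsto (fun jj => fk (φ jj) (d i)) atTop (𝓝 (L i)) := by
    set s : Set (ℕ → ℝ) := Set.univ.pi (fun i => Set.Icc (-‖d i‖) ‖d i‖) with hsdef
    have hscomp : IsCompact s := isCompact_univ_pi (fun i => isCompact_Icc)
    have hmem2 : ∀ k, (fun i => fk k (d i)) ∈ s := by
      intro k
      intro i _
      have h1 : |fk k (d i)| ≤ ‖d i‖ := by
        have := (fk k).le_opNorm (d i)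
        rw [hfk1 k, one_mul] at this
        simpa [Real.norm_eq_abs] using this
      exact ⟨neg_le_of_abs_le h1, le_of_abs_le h1⟩
    obtain ⟨L, _, φ, hφmono, hφtend⟩ := hscomp.tendsto_subseq hmem2
    refine ⟨φ, L, hφmono, ?_⟩
    intro i
    have := tendsto_pi_nhds.mp hφtend i
    exact this
  obtain ⟨φ, L, hφmono, hφtend⟩ := hdiagseq
  -- convergence on all of Zsub
  have hconvZ : ∀ z ∈ Zsub, ∃ l, Tendsto (fun jj => fk (φ jj) z) atTop (𝓝 l) := by
    intro z hz
    apply cauchySeq_tendsto_of_complete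
    rw [Metric.cauchySeq_iff']
    intro η hη
    obtain ⟨i, hi⟩ := hdense z hz (η/4) (by linarith)
    have hci : CauchySeq (fun jj => fk (φ jj) (d i)) := (hφtend i).cauchySeq
    obtain ⟨N, hN⟩ := Metric.cauchySeq_iff'.mp hci (η/4) (by linarith)
    refine ⟨N, fun n hn => ?_⟩
    have hb : ∀ m, |fk (φ m) z - fk (φ m) (d i)| ≤ η/4 := by
      intro m
      have heq : fk (φ m) z - fk (φ m) (d i) = fk (φ m) (z - d i) := by rw [map_sub]
      rw [heq]
      have h2 := (fk (φ m)).le_opNorm (z - d i)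
      rw [hfk1, one_mul] at h2
      calc |fk (φ m) (z - d i)| ≤ ‖z - d i‖ := by simpa [Real.norm_eq_abs] using h2
        _ ≤ η/4 := le_of_lt hi
    have h3 := hN n hn
    rw [Real.dist_eq] at h3 ⊢
    have heq2 : fk (φ n) z - fk (φ N) z = (fk (φ n) z - fk (φ n) (d i))
        + (fk (φ n) (d i) - fk (φ N) (d i)) + (fk (φ N) (d i) - fk (φ N) z) := by ring
    rw [heq2]
    calc |(fk (φ n) z - fk (φ n) (d i)) + (fk (φ n) (d i) - fk (φ N) (d i))
          + (fk (φ N) (d i) - fk (φ N) z)|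
        ≤ |fk (φ n) z - fk (φ n) (d i)| + |fk (φ n) (d i) - fk (φ N) (d i)|
          + |fk (φ N) (d i) - fk (φ N) z| := abs_add_three _ _ _
      _ < η := by
          have hb1 := hb n
          have hb2 := hb N
          rw [abs_sub_comm] at hb2
          linarith
  choose glim hglim using hconvZ
  -- the limit functional on Zsub
  set F0 : Zsub →ₗ[ℝ] ℝ :=
    { toFun := fun z => glim z.1 z.2
      map_add' := by
        intro z w
        have h1 := (hglim z.1 z.2).add (hglim w.1 w.2)
        have h2 : Tendsto (fun jj => fk (φ jj) ((z + w : Zsub) : Y)) atTop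
            (𝓝 (glim z.1 z.2 + glim w.1 w.2)) := by
          have : (fun jj => fk (φ jj) ((z + w : Zsub) : Y))
              = fun jj => fk (φ jj) z.1 + fk (φ jj) w.1 := by
            funext jj
            rw [Submodule.coe_add, map_add]
          rw [this]
          exact h1
        exact tendsto_nhds_unique (hglim (z + w).1 (z + w).2) h2
      map_smul' := by
        intro cc z
        have h1 := (hglim z.1 z.2).const_mul cc
        have h2 : Tendsto (fun jj => fk (φ jj) ((cc • z : Zsub) : Y)) atTop
            (𝓝 (cc * glim z.1 z.2)) := by
          have : (fun jj => fk (φ jj) ((cc • z : Zsub) : Y))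
              = fun jj => cc * fk (φ jj) z.1 := by
            funext jj
            rw [Submodule.coe_smul, map_smul]
            simp
          rw [this]
          exact h1
        simpa using tendsto_nhds_unique (hglim (cc • z).1 (cc • z).2) h2 } with hF0def
  have hF0bound : ∀ z : Zsub, ‖F0 z‖ ≤ 1 * ‖z‖ := by
    intro z
    rw [one_mul]
    have h1 := (hglim z.1 z.2).abs
    have h2 : ∀ jj, |fk (φ jj) z.1| ≤ ‖z‖ := by
      intro jj
      have h3 := (fk (φ jj)).le_opNorm z.1
      rw [hfk1, one_mul] at h3
      simpa [Real.norm_eq_abs] using h3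
    have := le_of_tendsto h1 (Filter.Eventually.of_forall h2)
    simpa [Real.norm_eq_abs, hF0def] using this
  set F0c : Zsub →L[ℝ] ℝ := F0.mkContinuous 1 hF0bound with hF0cdef
  obtain ⟨finf, hfinf, -⟩ := exists_extension_norm_eq Zsub F0c
  have hconv0 : ∀ z (hz : z ∈ Zsub), Tendsto (fun jj => fk (φ jj) z - finf z) atTop (𝓝 0) := by
    intro z hz
    have h1 : finf z = glim z hz := by
      have := hfinf ⟨z, hz⟩
      simpa [hF0cdef, hF0def] using this
    have h2 := (hglim z hz).sub_const (glim z hz)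
    rw [sub_self] at h2
    rw [h1]
    exact h2
  -- apply the Phillips lemma
  have hfinf_u : Tendsto (fun k => finf (u k)) atTop (𝓝 0) :=
    ((hsummf finf).of_abs).tendsto_atTop_zero
  have hev : ∀ᶠ k in atTop, |finf (u k)| < ε/2 := by
    have h1 := hfinf_u.abs
    simp only [abs_zero] at h1
    exact h1.eventually_lt_const (by linarith)
  obtain ⟨J₀, hJ₀⟩ := eventually_atTop.mp hev
  apply phillips_core (fun jj k => fk (φ (jj + J₀)) (u k) - finf (u k))
    ?_ ?_ (fun jj => φ (jj + J₀)) ?_ (ε/2) (by linarith) ?_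
  · intro jj
    have h1 := hsummf (fk (φ (jj + J₀)) - finf)
    have h2 : (fun k => |(fk (φ (jj + J₀)) - finf) (u k)|)
        = fun k => |fk (φ (jj + J₀)) (u k) - finf (u k)| := by
      funext k
      rw [ContinuousLinearMap.sub_apply]
    rwa [h2] at h1
  · intro A
    have heq : ∀ jj, ∑' k, A.indicator (fun k => fk (φ (jj + J₀)) (u k) - finf (u k)) k
        = fk (φ (jj + J₀)) (μ A) - finf (μ A) := by
      intro jj
      have h1 := hμspec A (fk (φ (jj + J₀)) - finf)
      have h2 : (fun k => A.indicator (fun k => (fk (φ (jj + J₀)) - finf) (u k)) k)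
          = fun k => A.indicator (fun k => fk (φ (jj + J₀)) (u k) - finf (u k)) k := by
        funext k
        congr 1
      rw [h2] at h1
      have h3 := h1.tsum_eq
      rw [h3]
      rw [ContinuousLinearMap.sub_apply]
    have h4 : (fun jj => ∑' k, A.indicator (fun k => fk (φ (jj + J₀)) (u k) - finf (u k)) k)
        = fun jj => fk (φ (jj + J₀)) (μ A) - finf (μ A) := funext heq
    rw [h4]
    exact (hconv0 (μ A) (hmem A)).comp (tendsto_add_atTop_nat J₀)
  · intro x y hxy
    exact hφmono (by omega)
  · intro jj
    set k0 := φ (jj + J₀) with hk0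
    have h1 : fk k0 (u k0) = ‖u k0‖ := hfk2 k0
    have h2 : J₀ ≤ k0 := le_trans (by omega) (hφmono.le_apply)
    have h3 := hJ₀ k0 h2
    have h4 := hu k0
    have h5 : fk k0 (u k0) - finf (u k0) ≤ |fk k0 (u k0) - finf (u k0)| := le_abs_self _
    have h6 : finf (u k0) ≤ |finf (u k0)| := le_abs_self _
    linarith

lemma sum_vanish_even {E : Type*} [AddCommMonoid E] (g : ℕ → E)
    (hg : ∀ j, j % 2 = 0 → g j = 0) :
    ∀ n : ℕ, ∑ j ∈ Finset.range (2*n+1), g j = ∑ k ∈ Finset.range n, g (2*k+1) := by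
  intro n
  induction n with
  | zero => simpa using hg 0 rfl
  | succ n ih =>
      have h1 : 2*(n+1)+1 = (2*n+1) + 1 + 1 := by omega
      rw [h1, Finset.sum_range_succ, Finset.sum_range_succ, ih, Finset.sum_range_succ]
      rw [hg (2*n+1+1) (by omega)]
      simp
      
section Bridge
variable {X Y : Type*} [NormedAddCommGroup X] [NormedSpace ℝ X]
    [NormedAddCommGroup Y] [NormedSpace ℝ Y]

lemma semivar_pairs_bound (a b : ℝ) (hab : a < b) (F : ℝ → X →L[ℝ] Y)
    (hF : semivar a b F ≠ ⊤) (p q : ℕ → ℝ) (n : ℕ)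
    (hap : 0 < n → a < p 0) (hpq : ∀ k, k < n → p k < q k)
    (hqp : ∀ k, k + 1 < n → q k < p (k+1)) (hqb : ∀ k, k < n → q k < b)
    (y : ℕ → X) (hy : ∀ k, ‖y k‖ ≤ 1) :
    ‖∑ k ∈ Finset.range n, (F (q k) - F (p k)) (y k)‖ ≤ (semivar a b F).toReal := by
  classical
  set α : ℕ → ℝ := fun j =>
    if j = 0 then a else if 2*n+1 ≤ j then b else
      (if j % 2 = 1 then p ((j-1)/2) else q ((j-2)/2)) with hαdef
  set xx : ℕ → X := fun j => if j % 2 = 1 then y ((j-1)/2) else 0 with hxxdef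
  have hα0 : α 0 = a := by simp [hαdef]
  have hαtop : α (2*n+1) = b := by simp [hαdef]
  have hαodd : ∀ k, k < n → α (2*k+1) = p k := by
    intro k hk
    have h1 : (2*k+1) % 2 = 1 := by omega
    have h2 : (2*k+1-1)/2 = k := by omega
    simp only [hαdef]
    rw [if_neg (by omega), if_neg (by omega), if_pos h1, h2]
  have hαeven : ∀ k, k < n → α (2*k+2) = q k := by
    intro k hk
    have h1 : ¬ ((2*k+2) % 2 = 1) := by omega
    have h2 : (2*k+2-2)/2 = k := by omega
    simp only [hαdef]
    rw [if_neg (by omega), if_neg (by omega), if_neg h1, h2]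
  have hdiv : IsDivision a b (2*n+1) α := by
    refine ⟨hα0, hαtop, ?_⟩
    intro i hi
    rcases Nat.eq_zero_or_pos i with rfl | hipos
    · -- i = 0
      rcases Nat.eq_zero_or_pos n with rfl | hnpos
      · have : α 1 = b := by simp [hαdef]
        rw [hα0, this]; exact hab
      · have : α 1 = p 0 := by simpa using hαodd 0 hnpos
        rw [hα0, this]; exact hap hnpos
    · rcases Nat.even_or_odd i with he | ho
      · -- i even, i ≥ 2 : i = 2k+2
        obtain ⟨k, hk⟩ := he
        have hik : i = 2*k := by omega
        have hkpos : 1 ≤ k := by omega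
        -- i = 2*(k-1)+2 with k-1 < n
        have hkn : k - 1 < n := by omega
        have hi2 : i = 2*(k-1)+2 := by omega
        have h1 : α i = q (k-1) := by rw [hi2]; exact hαeven _ hkn
        rcases eq_or_lt_of_le (Nat.succ_le_of_lt hi) with heq | hlt
        · -- i+1 = 2n+1
          have h2 : α (i+1) = b := by
            have : i + 1 = 2*n+1 := by omega
            rw [this, hαtop]
          rw [h1, h2]; exact hqb _ hkn
        · -- i+1 < 2n+1, i+1 = 2*k+1 with k < n
          have hkn2 : k < n := by omega
          have h2 : α (i+1) = p k := by
            have : i + 1 = 2*k+1 := by omega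
            rw [this]; exact hαodd _ hkn2
          rw [h1, h2]
          have := hqp (k-1) (by omega)
          have hkk : k - 1 + 1 = k := by omega
          rwa [hkk] at this
      · -- i odd : i = 2k+1, k < n
        obtain ⟨k, hk⟩ := ho
        have hkn : k < n := by omega
        have h1 : α i = p k := by rw [hk]; exact hαodd _ hkn
        have h2 : α (i+1) = q k := by
          have : i + 1 = 2*k+2 := by omega
          rw [this]; exact hαeven _ hkn
        rw [h1, h2]; exact hpq _ hkn
  have hxxb : ∀ j, ‖xx j‖ ≤ 1 := by
    intro j
    by_cases h : j % 2 = 1 <;> simp [hxxdef, h, hy]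
  -- sum equality
  have hsum : ∑ j ∈ Finset.range (2*n+1), (F (α (j+1)) - F (α j)) (xx j)
      = ∑ k ∈ Finset.range n, (F (q k) - F (p k)) (y k) := by
    rw [sum_vanish_even (fun j => (F (α (j+1)) - F (α j)) (xx j))]
    · apply Finset.sum_congr rfl
      intro k hk
      have hkn : k < n := Finset.mem_range.mp hk
      have h1 : xx (2*k+1) = y k := by
        have ha : (2*k+1) % 2 = 1 := by omega
        have hb2 : (2*k+1-1)/2 = k := by omega
        simp [hxxdef, ha, hb2]
      have h2 : (2*k+1) + 1 = 2*k+2 := by omega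
      rw [h1, h2, hαodd k hkn, hαeven k hkn]
    · intro j hj
      have hj2 : ¬ (j % 2 = 1) := by omega
      have : xx j = 0 := by simp [hxxdef, hj2]
      rw [this, map_zero]
  have hle : ENNReal.ofReal ‖∑ j ∈ Finset.range (2*n+1), (F (α (j+1)) - F (α j)) (xx j)‖
      ≤ semivar a b F := by
    refine le_iSup_of_le (2*n+1) (le_iSup_of_le α (le_iSup_of_le hdiv
      (le_iSup_of_le xx (le_iSup_of_le hxxb le_rfl))))
  rw [hsum] at hle
  exact (ENNReal.ofReal_le_iff_le_toReal hF).mp hle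

lemma semivar_pairs_bound_rev (a b : ℝ) (hab : a < b) (F : ℝ → X →L[ℝ] Y)
    (hF : semivar a b F ≠ ⊤) (p q : ℕ → ℝ)
    (hpq : ∀ k, p k < q k) (hqp : ∀ k, q (k+1) < p k) (hap : ∀ k, a < p k)
    (hqb : q 0 < b) (n : ℕ) (y : ℕ → X) (hy : ∀ k, ‖y k‖ ≤ 1) :
    ‖∑ k ∈ Finset.range n, (F (q k) - F (p k)) (y k)‖ ≤ (semivar a b F).toReal := by
  have hqb' : ∀ k, q k < b := by
    intro k
    induction k with
    | zero => exact hqb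
    | succ k ih => exact lt_trans (lt_trans (hqp k) (hpq k)) ih
  have key := semivar_pairs_bound a b hab F hF (fun k => p (n-1-k)) (fun k => q (n-1-k)) n
    (fun _ => hap _) (fun k _ => hpq _)
    (fun k hk => by
      show q (n - 1 - k) < p (n - 1 - (k+1))
      have h1 : n - 1 - k = (n - 1 - (k+1)) + 1 := by omega
      rw [h1]
      exact hqp _)
    (fun k _ => hqb' _) (fun k => y (n-1-k)) (fun k => hy _)
  rwa [Finset.sum_range_reflect (fun k => (F (q k) - F (p k)) (y k)) n] at key

lemma exists_norm_witness (T : X →L[ℝ] Y) (δ : ℝ) (hδ : 0 < δ) (hT : δ ≤ ‖T‖) :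
    ∃ x : X, ‖x‖ ≤ 1 ∧ δ/2 ≤ ‖T x‖ := by
  by_contra hcon
  push_neg at hcon
  have hb : ‖T‖ ≤ δ/2 := by
    apply T.opNorm_le_bound' (by linarith)
    intro x hx
    have hxpos : 0 < ‖x‖ := (norm_nonneg x).lt_of_ne' hx
    have h1 : ‖(‖x‖⁻¹ • x)‖ ≤ 1 := by
      rw [norm_smul, norm_inv, norm_norm]
      rw [inv_mul_cancel₀ (ne_of_gt hxpos)]
    have h2 := hcon _ h1
    have h3 : T x = ‖x‖ • T (‖x‖⁻¹ • x) := by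
      rw [← map_smul, smul_smul, mul_inv_cancel₀ (ne_of_gt hxpos), one_smul]
    rw [h3, norm_smul, Real.norm_eq_abs, abs_of_pos hxpos, mul_comm]
    exact mul_le_mul_of_nonneg_right (le_of_lt h2) (le_of_lt hxpos)
  linarith
end Bridge

lemma exists_mono_seq_of_infinite {D : Set ℝ} {a b : ℝ} (hD : D.Infinite)
    (hsub : D ⊆ Set.Icc a b) :
    ∃ t : ℕ → ℝ, (∀ k, t k ∈ D) ∧ (StrictMono t ∨ StrictAnti t) := by
  classical
  set x : ℕ → ℝ := fun n => ((Set.Infinite.natEmbedding D hD) n : ℝ) with hxdef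
  have hxD : ∀ n, x n ∈ D := fun n => ((Set.Infinite.natEmbedding D hD) n).2
  have hxinj : Function.Injective x := fun m n h =>
    (Set.Infinite.natEmbedding D hD).injective (Subtype.ext h)
  obtain ⟨l, -, φ, hφ, hconv⟩ := tendsto_subseq_of_bounded (Metric.isBounded_Icc a b)
    (fun n => hsub (hxD n))
  set w : ℕ → ℝ := x ∘ φ with hwdef
  have hwD : ∀ n, w n ∈ D := fun n => hxD (φ n)
  have hwinj : Function.Injective w := hxinj.comp hφ.injective
  have hsplit : {n | w n < l}.Infinite ∨ {n | l < w n}.Infinite := by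
    by_contra hcon
    push_neg at hcon
    obtain ⟨h1, h2⟩ := hcon
    have h3 : {n | w n = l}.Subsingleton := fun m hm n hn => hwinj (hm.trans hn.symm)
    have h4 : (Set.univ : Set ℕ) ⊆ ({n | w n < l} ∪ {n | l < w n}) ∪ {n | w n = l} := by
      intro n _
      rcases lt_trichotomy (w n) l with h | h | h
      · exact Or.inl (Or.inl h)
      · exact Or.inr h
      · exact Or.inl (Or.inr h)
    exact Set.infinite_univ (((h1.union h2).union h3.finite).subset h4)
  rcases hsplit with hlt | hgt
  · -- strictly increasing sequence
    have hpick : ∀ c, c < l → ∃ v, v ∈ D ∧ c < v ∧ v < l := by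
      intro c hc
      have hfreq : ∃ᶠ n in atTop, w n < l := Nat.frequently_atTop_iff_infinite.mpr hlt
      have hev : ∀ᶠ n in atTop, |w n - l| < l - c := by
        obtain ⟨N, hN⟩ := Metric.tendsto_atTop.mp hconv (l - c) (by linarith)
        refine eventually_atTop.mpr ⟨N, fun n hn => ?_⟩
        have := hN n hn
        rwa [Real.dist_eq] at this
      obtain ⟨n, h1, h2⟩ := (hfreq.and_eventually hev).exists
      obtain ⟨h3, h4⟩ := abs_lt.mp h2
      exact ⟨w n, hwD n, by linarith, h1⟩
    have hstep : ∀ c : {c : ℝ // c < l}, ∃ v : {c : ℝ // c < l}, v.1 ∈ D ∧ c.1 < v.1 := by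
      intro c
      obtain ⟨v, hv1, hv2, hv3⟩ := hpick c.1 c.2
      exact ⟨⟨v, hv3⟩, hv1, hv2⟩
    choose f hf1 hf2 using hstep
    have hstart : l - 1 < l := by linarith
    refine ⟨fun k => (f^[k+1] ⟨l - 1, hstart⟩).1, fun k => ?_,
      Or.inl (strictMono_nat_of_lt_succ fun k => ?_)⟩
    · show (f^[k+1] ⟨l - 1, hstart⟩).1 ∈ D
      rw [Function.iterate_succ_apply']
      exact hf1 _
    · show (f^[k+1] ⟨l - 1, hstart⟩).1 < (f^[k+1+1] ⟨l - 1, hstart⟩).1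
      rw [Function.iterate_succ_apply' f (k+1)]
      exact hf2 _
  · -- strictly decreasing sequence
    have hpick : ∀ c, l < c → ∃ v, v ∈ D ∧ v < c ∧ l < v := by
      intro c hc
      have hfreq : ∃ᶠ n in atTop, l < w n := Nat.frequently_atTop_iff_infinite.mpr hgt
      have hev : ∀ᶠ n in atTop, |w n - l| < c - l := by
        obtain ⟨N, hN⟩ := Metric.tendsto_atTop.mp hconv (c - l) (by linarith)
        refine eventually_atTop.mpr ⟨N, fun n hn => ?_⟩
        have := hN n hn
        rwa [Real.dist_eq] at this
      obtain ⟨n, h1, h2⟩ := (hfreq.and_eventually hev).exists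
      obtain ⟨h3, h4⟩ := abs_lt.mp h2
      exact ⟨w n, hwD n, by linarith, h1⟩
    have hstep : ∀ c : {c : ℝ // l < c}, ∃ v : {c : ℝ // l < c}, v.1 ∈ D ∧ v.1 < c.1 := by
      intro c
      obtain ⟨v, hv1, hv2, hv3⟩ := hpick c.1 c.2
      exact ⟨⟨v, hv3⟩, hv1, hv2⟩
    choose f hf1 hf2 using hstep
    have hstart : l < l + 1 := by linarith
    refine ⟨fun k => (f^[k+1] ⟨l + 1, hstart⟩).1, fun k => ?_,
      Or.inr (strictAnti_nat_of_succ_lt fun k => ?_)⟩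
    · show (f^[k+1] ⟨l + 1, hstart⟩).1 ∈ D
      rw [Function.iterate_succ_apply']
      exact hf1 _
    · show (f^[k+1+1] ⟨l + 1, hstart⟩).1 < (f^[k+1] ⟨l + 1, hstart⟩).1
      rw [Function.iterate_succ_apply' f (k+1)]
      exact hf2 _

lemma osc_set_finite {X Y : Type*} [NormedAddCommGroup X] [NormedSpace ℝ X]
    [NormedAddCommGroup Y] [NormedSpace ℝ Y] (hY : WeaklySeqComplete Y)
    (a b : ℝ) (hab : a < b) (F : ℝ → X →L[ℝ] Y) (hF : semivar a b F ≠ ⊤)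
    (δ : ℝ) (hδ : 0 < δ) :
    {t | t ∈ Set.Icc a b ∧
      ∀ η > 0, ∃ s ∈ Set.Icc a b, |s - t| < η ∧ δ ≤ ‖F s - F t‖}.Finite := by
  classical
  by_contra hinf
  have hinf' : Set.Infinite _ := hinf
  obtain ⟨t, htD, hmono⟩ := exists_mono_seq_of_infinite hinf' (fun x hx => hx.1)
  have htIcc : ∀ k, t k ∈ Set.Icc a b := fun k => (htD k).1
  have hosc : ∀ (k : ℕ) (η : ℝ), 0 < η →
      ∃ s ∈ Set.Icc a b, |s - t (k+1)| < η ∧ δ ≤ ‖F s - F (t (k+1))‖ :=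
    fun k η hη => (htD (k+1)).2 η hη
  rcases hmono with hmono | hanti
  · -- increasing case
    set g : ℕ → ℝ := fun k => min (t (k+1) - t k) (t (k+2) - t (k+1)) / 2 with hgdef
    have hg0 : ∀ k, 0 < g k := by
      intro k
      have h1 := hmono (Nat.lt_succ_self k)
      have h2 := hmono (Nat.lt_succ_self (k+1))
      simp only [hgdef]
      have : (0:ℝ) < min (t (k+1) - t k) (t (k+2) - t (k+1)) :=
        lt_min (by linarith) (by linarith)
      linarith
    have hg1 : ∀ k, g k ≤ (t (k+1) - t k)/2 := by
      intro k
      have h := min_le_left (t (k+1) - t k) (t (k+2) - t (k+1))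
      simp only [hgdef]
      linarith
    have hg2 : ∀ k, g k ≤ (t (k+2) - t (k+1))/2 := by
      intro k
      have h := min_le_right (t (k+1) - t k) (t (k+2) - t (k+1))
      simp only [hgdef]
      linarith
    choose s hsIcc hsclose hsnorm using fun k => hosc k (g k) (hg0 k)
    set p : ℕ → ℝ := fun k => min (s k) (t (k+1)) with hpdef
    set q : ℕ → ℝ := fun k => max (s k) (t (k+1)) with hqdef
    have hsne : ∀ k, s k ≠ t (k+1) := by
      intro k h
      have := hsnorm k
      rw [h, sub_self, norm_zero] at this
      linarith
    have hpq : ∀ k, p k < q k := fun k => min_lt_max.mpr (hsne k)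
    have hplo : ∀ k, t (k+1) - g k < p k := by
      intro k
      apply lt_min
      · have := (abs_lt.mp (hsclose k)).1; linarith
      · linarith [hg0 k]
    have hqhi : ∀ k, q k < t (k+1) + g k := by
      intro k
      apply max_lt
      · have := (abs_lt.mp (hsclose k)).2; linarith
      · linarith [hg0 k]
    have hap : a < p 0 := by
      have h0 := (htIcc 0).1
      have h1 := hplo 0
      have h2 := hg1 0
      have h3 := hmono (Nat.lt_succ_self 0)
      linarith
    have hqp : ∀ k, q k < p (k+1) := by
      intro k
      have h1 := hqhi k
      have h2 := hg2 k
      have h3 := hplo (k+1)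
      have h4 := hg1 (k+1)
      linarith
    have hqb : ∀ k, q k < b := by
      intro k
      have h1 := hqhi k
      have h2 := hg2 k
      have h3 : t (k+2) < t (k+3) := hmono (by omega)
      have h4 := (htIcc (k+3)).2
      have h5 : t (k+1) < t (k+2) := hmono (by omega)
      linarith
    have hTnorm : ∀ k, δ ≤ ‖F (q k) - F (p k)‖ := by
      intro k
      rcases le_total (s k) (t (k+1)) with h | h
      · have hp : p k = s k := min_eq_left h
        have hq : q k = t (k+1) := max_eq_right h
        rw [hp, hq, norm_sub_rev]
        exact hsnorm k
      · have hp : p k = t (k+1) := min_eq_right h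
        have hq : q k = s k := max_eq_left h
        rw [hp, hq]
        exact hsnorm k
    choose x hx1 hx2 using fun k => exists_norm_witness (F (q k) - F (p k)) δ hδ (hTnorm k)
    apply wsc_core hY (fun k => (F (q k) - F (p k)) (x k)) (semivar a b F).toReal ?_ (δ/2)
      (by linarith) hx2
    intro n θ hθ
    have heq : ∑ k ∈ Finset.range n, θ k • (F (q k) - F (p k)) (x k)
        = ∑ k ∈ Finset.range n, (F (q k) - F (p k)) (θ k • x k) := by
      apply Finset.sum_congr rfl
      intro k _
      rw [map_smul]
    rw [heq]
    apply semivar_pairs_bound a b hab F hF p q n (fun _ => hap) (fun k _ => hpq k)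
      (fun k _ => hqp k) (fun k _ => hqb k)
    intro k
    rw [norm_smul, Real.norm_eq_abs]
    exact mul_le_one₀ (hθ k) (norm_nonneg _) (hx1 k)
  · -- decreasing case
    set g : ℕ → ℝ := fun k => min (t k - t (k+1)) (t (k+1) - t (k+2)) / 2 with hgdef
    have hg0 : ∀ k, 0 < g k := by
      intro k
      have h1 := hanti (Nat.lt_succ_self k)
      have h2 := hanti (Nat.lt_succ_self (k+1))
      simp only [hgdef]
      have : (0:ℝ) < min (t k - t (k+1)) (t (k+1) - t (k+2)) :=
        lt_min (by linarith) (by linarith)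
      linarith
    have hg1 : ∀ k, g k ≤ (t k - t (k+1))/2 := by
      intro k
      have h := min_le_left (t k - t (k+1)) (t (k+1) - t (k+2))
      simp only [hgdef]
      linarith
    have hg2 : ∀ k, g k ≤ (t (k+1) - t (k+2))/2 := by
      intro k
      have h := min_le_right (t k - t (k+1)) (t (k+1) - t (k+2))
      simp only [hgdef]
      linarith
    choose s hsIcc hsclose hsnorm using fun k => hosc k (g k) (hg0 k)
    set p : ℕ → ℝ := fun k => min (s k) (t (k+1)) with hpdef
    set q : ℕ → ℝ := fun k => max (s k) (t (k+1)) with hqdef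
    have hsne : ∀ k, s k ≠ t (k+1) := by
      intro k h
      have := hsnorm k
      rw [h, sub_self, norm_zero] at this
      linarith
    have hpq : ∀ k, p k < q k := fun k => min_lt_max.mpr (hsne k)
    have hplo : ∀ k, t (k+1) - g k < p k := by
      intro k
      apply lt_min
      · have := (abs_lt.mp (hsclose k)).1; linarith
      · linarith [hg0 k]
    have hqhi : ∀ k, q k < t (k+1) + g k := by
      intro k
      apply max_lt
      · have := (abs_lt.mp (hsclose k)).2; linarith
      · linarith [hg0 k]
    have hqp : ∀ k, q (k+1) < p k := by
      intro k
      have h1 := hqhi (k+1)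
      have h2 := hg1 (k+1)
      have h3 := hplo k
      have h4 := hg2 k
      linarith
    have hap : ∀ k, a < p k := by
      intro k
      have h1 := hplo k
      have h2 := hg2 k
      have h3 := (htIcc (k+2)).1
      have h4 := hanti (Nat.lt_succ_self (k+1))
      linarith
    have hqb : q 0 < b := by
      have h1 := hqhi 0
      have h2 := hg1 0
      have h3 := (htIcc 0).2
      have h4 := hanti (Nat.lt_succ_self 0)
      linarith
    have hTnorm : ∀ k, δ ≤ ‖F (q k) - F (p k)‖ := by
      intro k
      rcases le_total (s k) (t (k+1)) with h | h
      · have hp : p k = s k := min_eq_left h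
        have hq : q k = t (k+1) := max_eq_right h
        rw [hp, hq, norm_sub_rev]
        exact hsnorm k
      · have hp : p k = t (k+1) := min_eq_right h
        have hq : q k = s k := max_eq_left h
        rw [hp, hq]
        exact hsnorm k
    choose x hx1 hx2 using fun k => exists_norm_witness (F (q k) - F (p k)) δ hδ (hTnorm k)
    apply wsc_core hY (fun k => (F (q k) - F (p k)) (x k)) (semivar a b F).toReal ?_ (δ/2)
      (by linarith) hx2
    intro n θ hθ
    have heq : ∑ k ∈ Finset.range n, θ k • (F (q k) - F (p k)) (x k)
        = ∑ k ∈ Finset.range n, (F (q k) - F (p k)) (θ k • x k) := by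
      apply Finset.sum_congr rfl
      intro k _
      rw [map_smul]
    rw [heq]
    apply semivar_pairs_bound_rev a b hab F hF p q hpq hqp hap hqb n
    intro k
    rw [norm_smul, Real.norm_eq_abs]
    exact mul_le_one₀ (hθ k) (norm_nonneg _) (hx1 k)

/-- if `Y` is weakly sequentially complete and `F : [a,b] → L(X,Y)` has bounded
semivariation, then `F` is continuous (in operator norm) on `[a,b]` except for a countable set. -/
theorem semivar_continuous_outside_countable
    {X Y : Type*} [NormedAddCommGroup X] [NormedSpace ℝ X] [CompleteSpace X]
    [NormedAddCommGroup Y] [NormedSpace ℝ Y] [CompleteSpace Y]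
    (hY : WeaklySeqComplete Y)
    (a b : ℝ) (hab : a < b) (F : ℝ → X →L[ℝ] Y) (hF : semivar a b F < ⊤) :
    ∃ S : Set ℝ, S.Countable ∧
      ∀ t ∈ Set.Icc a b \ S, ContinuousWithinAt F (Set.Icc a b) t := by
  classical
  have hFne : semivar a b F ≠ ⊤ := hF.ne
  set D : ℝ → Set ℝ := fun δ => {t | t ∈ Set.Icc a b ∧
      ∀ η > 0, ∃ s ∈ Set.Icc a b, |s - t| < η ∧ δ ≤ ‖F s - F t‖} with hDdef
  refine ⟨⋃ m : ℕ, D (1/(m+1)), Set.countable_iUnion (fun m =>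
    (osc_set_finite hY a b hab F hFne (1/(m+1)) (by positivity)).countable), ?_⟩
  rintro t ⟨htIcc, htS⟩
  rw [ContinuousWithinAt, Metric.tendsto_nhdsWithin_nhds]
  intro ε hε
  obtain ⟨m, hm⟩ := exists_nat_one_div_lt hε
  have htm : t ∉ D (1/(m+1)) := fun h => htS (Set.mem_iUnion.mpr ⟨m, h⟩)
  rw [hDdef, Set.mem_setOf_eq] at htm
  push_neg at htm
  obtain ⟨η, hη, hgood⟩ := htm htIcc
  refine ⟨η, hη, ?_⟩
  intro s hs hdist
  rw [Real.dist_eq] at hdist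
  have h1 := hgood s hs hdist
  rw [dist_eq_norm]
  linarith [h1, hm]
end
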